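/- arXiv:1901.04688 — 7 statements merged into one kernel-verified Lean document; each statement's English description precedes it below -/
import Mathlib

section
/- There exists an infinite minimal subshift X over the alphabet {0,1} that is language-connected, i.e., for every n ≥ 1 the set L_n(X) of words of length n occurring in X is a connected subset of the Hamming graph on {0,1}^n. -/
/-!
There exists an infinite minimal subshift over `{0,1}` (modelled as `Bool`) that is
language-connected: for every `n ≥ 1`, the set of words of length `n` occurring in the
subshift is a connected subset of the Hamming graph on `{0,1}^n`.
-/

/-- The shift map `σ` on the full shift `{0,1}^ℤ`, `(σ x) n = x (n + 1)`. -/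
def shiftMap (x : ℤ → Bool) : ℤ → Bool := fun n => x (n + 1)

/-- A subshift: a nonempty closed shift-invariant subset of the full shift
(`ℤ → Bool` carries the product topology, `Bool` being discrete). -/
def IsSubshift (X : Set (ℤ → Bool)) : Prop :=
  X.Nonempty ∧ IsClosed X ∧ shiftMap '' X = X

/-- A subshift is minimal if it contains no nonempty closed shift-invariant proper subset. -/
def IsMinimalSubshift (X : Set (ℤ → Bool)) : Prop :=
  IsSubshift X ∧ ∀ Y ⊆ X, IsClosed Y → shiftMap '' Y = Y → Y.Nonempty → Y = X

/-- `Lang X n` is the set of words of length `n` occurring in points of `X`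
(read off at coordinates `0, …, n-1`). -/
def Lang (X : Set (ℤ → Bool)) (n : ℕ) : Set (Fin n → Bool) :=
  {w | ∃ x ∈ X, ∀ k : Fin n, w k = x ((k : ℕ) : ℤ)}

/-- A set of words `W ⊆ {0,1}^n` is Hamming-connected if the graph on `W` whose
edges join words at Hamming distance exactly `1` is connected: any two words of `W`
are joined by a path inside `W` whose consecutive words differ in exactly one position. -/
def HammingConnected {n : ℕ} (W : Set (Fin n → Bool)) : Prop :=
  ∀ u ∈ W, ∀ v ∈ W,
    Relation.ReflTransGen (fun a b => a ∈ W ∧ b ∈ W ∧ hammingDist a b = 1) u v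

/-- A subshift is language-connected if `Lang X n` is Hamming-connected for every `n ≥ 1`. -/
def LanguageConnected (X : Set (ℤ → Bool)) : Prop :=
  ∀ n : ℕ, 1 ≤ n → HammingConnected (Lang X n)

noncomputable section
namespace RotEx

def al : ℝ := Real.sqrt 2

lemma irr_al : Irrational al := irrational_sqrt_two

lemma not_int (i : ℤ) (hi : i ≠ 0) (k : ℤ) : 2*(i:ℝ)*al ≠ (k:ℝ) := by
  intro h
  have h2i : (2:ℝ)*(i:ℝ) ≠ 0 := by
    have : (i:ℝ) ≠ 0 := Int.cast_ne_zero.mpr hi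
    positivity
  apply irr_al
  refine ⟨(k : ℚ)/(2*i), ?_⟩
  have : al = (k : ℝ)/(2*(i:ℝ)) := by
    field_simp at h ⊢
    linarith [h]
  rw [this]
  push_cast
  ring

/-- floor data of letter `i` at parameter `γ`. -/
def g (i : ℤ) (γ : ℝ) : ℤ := ⌊2 * ((i:ℝ) * al + γ)⌋

def bit (i : ℤ) (γ : ℝ) : Bool := decide (Even (g i γ))

def om (m : ℤ) : Bool := bit m 0

lemma g_mono (i : ℤ) {γ γ' : ℝ} (h : γ ≤ γ') : g i γ ≤ g i γ' :=
  Int.floor_mono (by nlinarith)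

lemma g_add_int (i : ℤ) (γ : ℝ) (k : ℤ) : g i (γ + k) = g i γ + 2*k := by
  unfold g
  rw [show 2 * ((i:ℝ) * al + (γ + k)) = 2 * ((i:ℝ)*al + γ) + ((2*k : ℤ) : ℝ) by push_cast; ring]
  rw [Int.floor_add_intCast]

lemma bit_add_int (i : ℤ) (γ : ℝ) (k : ℤ) : bit i (γ + k) = bit i γ := by
  unfold bit
  rw [g_add_int]
  congr 1
  simp [Int.even_add, Int.even_mul]

lemma g_shift (i m : ℤ) : g (i + m) 0 = g i ((m:ℝ)*al) := by
  unfold g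
  congr 1
  push_cast
  ring

/-- first event of letter `i` strictly after `γ`. -/
def fe (i : ℤ) (γ : ℝ) : ℝ := ((g i γ + 1 : ℤ) : ℝ)/2 - (i:ℝ)*al

lemma fe_gt (i : ℤ) (γ : ℝ) : γ < fe i γ := by
  have h := Int.lt_floor_add_one (2 * ((i:ℝ) * al + γ))
  unfold fe g
  push_cast
  push_cast at h
  linarith

lemma g_eq_of_lt_fe (i : ℤ) {γ θ : ℝ} (h1 : γ ≤ θ) (h2 : θ < fe i γ) : g i θ = g i γ := by
  have hlow := g_mono i h1
  have hup : g i θ < g i γ + 1 := by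
    have : (2:ℝ) * ((i:ℝ)*al + θ) < ((g i γ + 1 : ℤ) : ℝ) := by
      unfold fe at h2; push_cast at h2 ⊢; linarith
    calc g i θ = ⌊2 * ((i:ℝ)*al + θ)⌋ := rfl
    _ < g i γ + 1 := Int.floor_lt.mpr this
  omega

lemma g_at_fe (i : ℤ) (γ : ℝ) : g i (fe i γ) = g i γ + 1 := by
  have h : 2 * ((i:ℝ) * al + fe i γ) = ((g i γ + 1 : ℤ) : ℝ) := by
    unfold fe; push_cast; ring
  show ⌊2 * ((i:ℝ)*al + fe i γ)⌋ = g i γ + 1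
  rw [h, Int.floor_intCast]

lemma fe_ne (i j : ℤ) (hij : i ≠ j) (γ : ℝ) : fe i γ ≠ fe j γ := by
  intro h
  unfold fe at h
  apply not_int (j - i) (by omega) (g j γ - g i γ)
  push_cast
  push_cast at h
  linarith


lemma denseMK (ξ : ℝ) (hξ : Irrational ξ) (a b : ℝ) (hab : a < b) :
    ∃ m k : ℤ, a < (m:ℝ)*ξ + k ∧ (m:ℝ)*ξ + k < b := by
  classical
  let S : AddSubgroup ℝ :=
    { carrier := {x | ∃ m k : ℤ, x = (m:ℝ)*ξ + k}
      zero_mem' := ⟨0, 0, by push_cast; ring⟩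
      add_mem' := by
        rintro x y ⟨m, k, rfl⟩ ⟨m', k', rfl⟩
        exact ⟨m + m', k + k', by push_cast; ring⟩
      neg_mem' := by
        rintro x ⟨m, k, rfl⟩
        exact ⟨-m, -k, by push_cast; ring⟩ }
  have hdense : Dense (S : Set ℝ) := by
    rcases S.dense_or_cyclic with h | ⟨c, hc⟩
    · exact h
    · exfalso
      have h1 : (1:ℝ) ∈ S := ⟨0, 1, by push_cast; ring⟩
      have hxi : ξ ∈ S := ⟨1, 0, by push_cast; ring⟩
      rw [hc, AddSubgroup.mem_closure_singleton] at h1 hxi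
      obtain ⟨nn, hn⟩ := h1
      obtain ⟨n', hn'⟩ := hxi
      rw [zsmul_eq_mul] at hn hn'
      have hnne : (nn:ℝ) ≠ 0 := by
        intro h0
        rw [h0, zero_mul] at hn
        exact one_ne_zero hn.symm
      apply hξ
      refine ⟨(n' : ℚ)/(nn : ℚ), ?_⟩
      have hc' : c = 1/(nn:ℝ) := by field_simp at hn ⊢; linarith
      push_cast
      rw [← hn', hc']
      field_simp
  obtain ⟨t, htS, hab'⟩ := hdense.exists_between hab
  obtain ⟨m, k, rfl⟩ := htS
  exact ⟨m, k, hab'.1, hab'.2⟩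

lemma approx (F : Finset ℤ) (hF : F.Nonempty) (γ : ℝ) :
    ∃ m k : ℤ, ∀ i ∈ F, g i ((m:ℝ)*al + (k:ℝ)) = g i γ := by
  obtain ⟨i₀, hi₀, hmin⟩ := F.exists_min_image (fun i => fe i γ) hF
  obtain ⟨m, k, h1, h2⟩ := denseMK al irr_al γ (fe i₀ γ) (fe_gt _ _)
  exact ⟨m, k, fun i hi => g_eq_of_lt_fe i (le_of_lt h1) (lt_of_lt_of_le h2 (hmin i hi))⟩

/-- the length-`n` word at parameter `γ`. -/
def word (n : ℕ) (γ : ℝ) : Fin n → Bool := fun j => bit ((j : ℕ) : ℤ) γ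

lemma word_eq_of_g_eq {n : ℕ} {γ γ' : ℝ}
    (h : ∀ j : Fin n, g ((j:ℕ):ℤ) γ' = g ((j:ℕ):ℤ) γ) : word n γ' = word n γ :=
  funext fun j => by unfold word bit; rw [h j]

lemma conn (n : ℕ) (L : Set (Fin n → Bool)) (hmem : ∀ γ : ℝ, word n γ ∈ L) :
    ∀ K : ℕ, ∀ γ γ' : ℝ, γ ≤ γ' →
      (∑ j : Fin n, (g ((j:ℕ):ℤ) γ' - g ((j:ℕ):ℤ) γ)) = (K : ℤ) →
      Relation.ReflTransGen (fun a b => a ∈ L ∧ b ∈ L ∧ hammingDist a b = 1)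
        (word n γ) (word n γ') := by
  intro K
  induction K with
  | zero =>
    intro γ γ' hle hsum
    have hnn : ∀ j ∈ (Finset.univ : Finset (Fin n)), (0:ℤ) ≤ g ((j:ℕ):ℤ) γ' - g ((j:ℕ):ℤ) γ :=
      fun j _ => sub_nonneg.mpr (g_mono _ hle)
    have hz := (Finset.sum_eq_zero_iff_of_nonneg hnn).mp
      (by rw [hsum]; norm_num)
    have : word n γ' = word n γ :=
      word_eq_of_g_eq (fun j => by have := hz j (Finset.mem_univ j); omega)
    rw [← this]
  | succ K ih =>
    intro γ γ' hle hsum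
    classical
    have hnn : ∀ j : Fin n, (0:ℤ) ≤ g ((j:ℕ):ℤ) γ' - g ((j:ℕ):ℤ) γ :=
      fun j => sub_nonneg.mpr (g_mono _ hle)
    have hpos : ∃ j₀ : Fin n, 0 < g ((j₀:ℕ):ℤ) γ' - g ((j₀:ℕ):ℤ) γ := by
      by_contra h
      push_neg at h
      have hz : (∑ j : Fin n, (g ((j:ℕ):ℤ) γ' - g ((j:ℕ):ℤ) γ)) = 0 :=
        Finset.sum_eq_zero (fun j _ => le_antisymm (h j) (hnn j))
      rw [hz] at hsum
      exact absurd hsum.symm (by exact_mod_cast Nat.succ_ne_zero K)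
    obtain ⟨j₀, hj₀⟩ := hpos
    set A : Finset (Fin n) := Finset.univ.filter (fun j => fe ((j:ℕ):ℤ) γ ≤ γ') with hA
    have hj₀A : j₀ ∈ A := by
      rw [hA, Finset.mem_filter]
      refine ⟨Finset.mem_univ _, ?_⟩
      have h1 : g ((j₀:ℕ):ℤ) γ + 1 ≤ g ((j₀:ℕ):ℤ) γ' := by omega
      have h2 : ((g ((j₀:ℕ):ℤ) γ + 1 : ℤ) : ℝ) ≤ 2 * ((((j₀:ℕ):ℤ) : ℝ)*al + γ') := by
        calc ((g ((j₀:ℕ):ℤ) γ + 1 : ℤ) : ℝ) ≤ ((g ((j₀:ℕ):ℤ) γ' : ℤ) : ℝ) := by exact_mod_cast h1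
        _ ≤ _ := Int.floor_le _
      unfold fe
      push_cast at h2 ⊢
      linarith
    obtain ⟨jm, hjmA, hjm⟩ := A.exists_min_image (fun j => fe ((j:ℕ):ℤ) γ) ⟨j₀, hj₀A⟩
    set e := fe ((jm:ℕ):ℤ) γ with he
    have hγe : γ < e := fe_gt _ _
    have heγ' : e ≤ γ' := (Finset.mem_filter.mp hjmA).2
    have cinj : ∀ j j' : Fin n, ((j:ℕ):ℤ) = ((j':ℕ):ℤ) → j = j' := by
      intro j j' hjj
      exact Fin.ext (by exact_mod_cast hjj)
    have hg : ∀ j : Fin n, g ((j:ℕ):ℤ) e = if j = jm then g ((j:ℕ):ℤ) γ + 1 else g ((j:ℕ):ℤ) γ := by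
      intro j
      by_cases hj : j = jm
      · subst hj
        rw [if_pos rfl, he, g_at_fe]
      · rw [if_neg hj]
        have hne : fe ((j:ℕ):ℤ) γ ≠ e := by
          rw [he]
          exact fe_ne _ _ (fun hcc => hj (cinj _ _ hcc)) γ
        have hlt : e < fe ((j:ℕ):ℤ) γ := by
          by_cases hjA : j ∈ A
          · exact lt_of_le_of_ne (hjm j hjA) (Ne.symm hne)
          · have hgt : ¬ (fe ((j:ℕ):ℤ) γ ≤ γ') := by
              rw [hA] at hjA
              simpa [Finset.mem_filter] using hjA
            push_neg at hgt
            linarith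
        exact g_eq_of_lt_fe _ hγe.le hlt
    have hdiff : hammingDist (word n γ) (word n e) = 1 := by
      have hfilter : (Finset.univ.filter (fun j : Fin n => word n γ j ≠ word n e j)) = {jm} := by
        ext j
        simp only [Finset.mem_filter, Finset.mem_univ, true_and, Finset.mem_singleton]
        constructor
        · intro hne
          by_contra hj
          apply hne
          unfold word bit
          rw [hg j, if_neg hj]
        · intro hj
          unfold word bit
          rw [hg j, if_pos hj]
          rw [show ∀ b c : Bool, (b ≠ c) ↔ ¬(b = c) from fun _ _ => Iff.rfl]
          rw [decide_eq_decide]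
          rw [Int.even_add_one]
          tauto
      show (Finset.univ.filter (fun j : Fin n => word n γ j ≠ word n e j)).card = 1
      rw [hfilter]
      exact Finset.card_singleton _
    have hsum' : (∑ j : Fin n, (g ((j:ℕ):ℤ) γ' - g ((j:ℕ):ℤ) e)) = (K : ℤ) := by
      have hterm : ∀ j ∈ (Finset.univ : Finset (Fin n)), g ((j:ℕ):ℤ) γ' - g ((j:ℕ):ℤ) e
           = (g ((j:ℕ):ℤ) γ' - g ((j:ℕ):ℤ) γ) - (if j = jm then (1:ℤ) else 0) := by
        intro j _
        rw [hg j]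
        split <;> ring
      rw [Finset.sum_congr rfl hterm, Finset.sum_sub_distrib,
        Finset.sum_ite_eq' Finset.univ jm (fun _ => (1:ℤ))]
      simp only [Finset.mem_univ, if_pos]
      push_cast at hsum ⊢
      linarith
    exact Relation.ReflTransGen.head ⟨hmem γ, hmem e, hdiff⟩ (ih e γ' heγ' hsum')

/-- the shifted orbit points. -/
def pt (m : ℤ) : ℤ → Bool := fun i => om (i + m)

def orb : Set (ℤ → Bool) := Set.range pt

/-- our subshift: the orbit closure. -/
def XX : Set (ℤ → Bool) := closure orb

lemma om_eq (i m : ℤ) : om (i + m) = bit i ((m:ℝ)*al) := by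
  unfold om bit
  rw [g_shift]

lemma closure_window {S : Set (ℤ → Bool)} {x : ℤ → Bool} (hx : x ∈ closure S) (F : Finset ℤ) :
    ∃ s ∈ S, ∀ i ∈ F, s i = x i := by
  have hU : IsOpen {z : ℤ → Bool | ∀ i ∈ F, z i = x i} := by
    have he : {z : ℤ → Bool | ∀ i ∈ F, z i = x i}
        = ⋂ i ∈ F, (fun z : ℤ → Bool => z i) ⁻¹' {x i} := by
      ext z; simp
    rw [he]
    exact isOpen_biInter_finset fun i _ =>
      (continuous_apply i).isOpen_preimage _ (isOpen_discrete _)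
  rcases mem_closure_iff.mp hx _ hU (fun i _ => rfl) with ⟨s, hs1, hs2⟩
  exact ⟨s, hs2, hs1⟩

lemma mem_closure_of_windows {S : Set (ℤ → Bool)} {x : ℤ → Bool}
    (h : ∀ F : Finset ℤ, ∃ s ∈ S, ∀ i ∈ F, s i = x i) : x ∈ closure S := by
  rw [mem_closure_iff]
  intro U hU hxU
  rcases isOpen_pi_iff.mp hU x hxU with ⟨I, u, hu, hsub⟩
  rcases h I with ⟨s, hsS, hs⟩
  refine ⟨s, hsub ?_, hsS⟩
  intro i hi
  have hi' : i ∈ I := hi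
  rw [hs i hi']
  exact (hu i hi').2

/-- the shift as a homeomorphism. -/
def shiftHomeo : (ℤ → Bool) ≃ₜ (ℤ → Bool) where
  toFun := shiftMap
  invFun := fun x i => x (i - 1)
  left_inv := fun x => funext fun i => by simp [shiftMap]
  right_inv := fun x => funext fun i => by simp [shiftMap]
  continuous_toFun := continuous_pi fun i => continuous_apply (i + 1)
  continuous_invFun := continuous_pi fun i => continuous_apply (i - 1)

lemma shift_orb : shiftMap '' orb = orb := by
  ext x
  constructor
  · rintro ⟨y, ⟨m, rfl⟩, rfl⟩
    exact ⟨m + 1, funext fun i => congrArg om (by ring)⟩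
  · rintro ⟨m, rfl⟩
    exact ⟨pt (m - 1), ⟨m - 1, rfl⟩, funext fun i => congrArg om (by ring)⟩

lemma shift_XX : shiftMap '' XX = XX := by
  have h : shiftMap '' XX = closure (shiftMap '' orb) := shiftHomeo.image_closure orb
  rw [h, shift_orb]
  rfl


lemma isSubshift_XX : IsSubshift XX :=
  ⟨⟨pt 0, subset_closure ⟨0, rfl⟩⟩, isClosed_closure, shift_XX⟩

lemma shifts_mem {Y : Set (ℤ → Bool)} (hY : shiftMap '' Y = Y) {y : ℤ → Bool} (hy : y ∈ Y) :
    ∀ t : ℤ, (fun i => y (i + t)) ∈ Y := by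
  intro t
  induction t using Int.induction_on with
  | zero => simpa using hy
  | succ n ih =>
    have he : (fun i : ℤ => y (i + ((n:ℤ) + 1))) = shiftMap (fun i => y (i + n)) :=
      funext fun i => congrArg y (by ring)
    rw [he, ← hY]
    exact ⟨_, ih, rfl⟩
  | pred n ih =>
    have ihY : (fun i : ℤ => y (i + -(n:ℤ))) ∈ shiftMap '' Y := by rw [hY]; exact ih
    rcases ihY with ⟨z, hz, hze⟩
    have he : z = (fun i : ℤ => y (i + (-(n:ℤ) - 1))) := by
      funext i
      have h1 := congrFun hze (i - 1)
      simp only [shiftMap] at h1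
      rw [show i - 1 + 1 = i by ring] at h1
      rw [h1]
      exact congrArg y (by ring)
    rw [← he]
    exact hz

lemma walk (ε : ℝ) (hε : 0 < ε) (hε1 : ε ≤ 1/2) :
    ∃ gp : ℕ, ∀ a : ℤ, ∃ j k : ℤ, |j - a| ≤ gp ∧ 0 ≤ (j:ℝ)*al + k ∧ (j:ℝ)*al + k < ε := by
  classical
  obtain ⟨q, r, hqr1, hqr2⟩ := denseMK al irr_al 0 (ε/2) (by linarith)
  have hq0 : q ≠ 0 := by
    intro h0
    rw [h0] at hqr1 hqr2
    push_cast at hqr1 hqr2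
    simp only [zero_mul, zero_add] at hqr1 hqr2
    have : (0:ℤ) < r := by exact_mod_cast hqr1
    have : (r:ℝ) ≥ 1 := by exact_mod_cast this
    linarith
  set s : ℝ := (q:ℝ)*al + r with hs
  have hs0 : 0 < s := hqr1
  have hsε : s < ε/2 := hqr2
  set T : ℕ := ⌈1/s⌉₊ with hT
  refine ⟨T * q.natAbs, fun a => ?_⟩
  set β : ℝ := (a:ℝ)*al with hβ
  set M : ℤ := ⌈β⌉ with hM
  have hexT : (M:ℝ) ≤ β + T*s := by
    have h1 : (1:ℝ)/s ≤ T := Nat.le_ceil _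
    have h2 : (1:ℝ) ≤ T*s := by
      have := (div_le_iff₀ hs0).mp h1
      linarith
    have h3 : (M:ℝ) < β + 1 := Int.ceil_lt_add_one β
    linarith
  have hex : ∃ t : ℕ, (M:ℝ) ≤ β + t*s := ⟨T, hexT⟩
  obtain ⟨t0, ht0, hmin0⟩ : ∃ t0 : ℕ, ((M:ℝ) ≤ β + t0*s) ∧
      ∀ t', t' < t0 → ¬((M:ℝ) ≤ β + t'*s) :=
    ⟨Nat.find hex, Nat.find_spec hex, fun t' ht' => Nat.find_min hex ht'⟩
  have hTle : t0 ≤ T := by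
    by_contra hTT
    exact hmin0 T (by omega) hexT
  refine ⟨a + t0*q, t0*r - M, ?_, ?_, ?_⟩
  · have : |(t0:ℤ)*q| ≤ (T:ℤ)*|q| := by
      rw [abs_mul]
      have h1 : |(t0:ℤ)| = (t0:ℤ) := abs_of_nonneg (by positivity)
      rw [h1]
      have : (t0:ℤ) ≤ (T:ℤ) := by exact_mod_cast hTle
      exact mul_le_mul_of_nonneg_right this (abs_nonneg _)
    calc |a + t0*q - a| = |(t0:ℤ)*q| := by ring_nf
    _ ≤ (T:ℤ)*|q| := this
    _ = ((T * q.natAbs : ℕ) : ℤ) := by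
        rw [Int.abs_eq_natAbs]
        push_cast
        ring
  · have hval : ((a + t0*q : ℤ):ℝ)*al + ((t0*r - M : ℤ):ℝ) = β + t0*s - M := by
      rw [hs, hβ]; push_cast; ring
    rw [hval]; linarith
  · have hval : ((a + t0*q : ℤ):ℝ)*al + ((t0*r - M : ℤ):ℝ) = β + t0*s - M := by
      rw [hs, hβ]; push_cast; ring
    rw [hval]
    rcases Nat.eq_zero_or_pos t0 with h0 | hpos
    · -- value = β − M ≤ 0 < ε
      have : β ≤ (M:ℝ) := Int.le_ceil β
      rw [h0]
      push_cast
      linarith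
    · obtain ⟨t1, rfl⟩ : ∃ t1, t0 = t1 + 1 := ⟨t0 - 1, by omega⟩
      have hnot : ¬ ((M:ℝ) ≤ β + t1*s) := hmin0 t1 (by omega)
      push_neg at hnot
      push_cast
      nlinarith

lemma UR (N : ℕ) : ∃ gp : ℕ, ∀ a : ℤ, ∃ j : ℤ, |j - a| ≤ gp ∧
    ∀ i : ℤ, |i| ≤ (N:ℤ) → om (i + j) = om i := by
  set F : Finset ℤ := Finset.Icc (-(N:ℤ)) N with hF
  have hFne : F.Nonempty := ⟨0, by simp [hF]⟩
  obtain ⟨i₀, hi₀, hmin⟩ := F.exists_min_image (fun i => fe i 0) hFne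
  set ε : ℝ := min (fe i₀ 0) (1/2) with hεdef
  have hε : 0 < ε := lt_min (fe_gt i₀ 0) (by norm_num)
  obtain ⟨gp, hwalk⟩ := walk ε hε (min_le_right _ _)
  refine ⟨gp, fun a => ?_⟩
  obtain ⟨j, k, hj, h0, h1⟩ := hwalk a
  refine ⟨j, hj, fun i hi => ?_⟩
  have hiF : i ∈ F := by
    rw [abs_le] at hi
    rw [hF, Finset.mem_Icc]
    omega
  have hgi : g i ((j:ℝ)*al + k) = g i 0 :=
    g_eq_of_lt_fe i h0 (lt_of_lt_of_le h1 (le_trans (min_le_left _ _) (hmin i hiF)))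
  rw [om_eq i j, ← bit_add_int i ((j:ℝ)*al) k]
  show decide (Even (g i ((j:ℝ)*al + k))) = om i
  rw [hgi]
  rfl

lemma minimal_XX : ∀ Y ⊆ XX, IsClosed Y → shiftMap '' Y = Y → Y.Nonempty → Y = XX := by
  rintro Y hYX hYc hYs ⟨y, hy⟩
  have hom : om ∈ Y := by
    have hwin : ∀ F : Finset ℤ, ∃ s ∈ {z : ℤ → Bool | ∃ t : ℤ, z = fun i => y (i + t)},
        ∀ i ∈ F, s i = om i := by
      intro F
      obtain ⟨N, hN⟩ : ∃ N : ℕ, ∀ i ∈ F, |i| ≤ (N:ℤ) := by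
        rcases F.eq_empty_or_nonempty with h | h
        · exact ⟨0, by simp [h]⟩
        · obtain ⟨b, _, hb⟩ := F.exists_max_image (fun i => |i|) h
          exact ⟨b.natAbs + 1, fun i hi => le_trans (hb i hi) (by
            rw [Int.abs_eq_natAbs]; push_cast; omega)⟩
      obtain ⟨gp, hUR⟩ := UR N
      obtain ⟨s, hs, hagree⟩ := closure_window (hYX hy)
        (Finset.Icc (-((N:ℤ) + gp)) ((N:ℤ) + gp))
      rcases hs with ⟨m₀, rfl⟩
      obtain ⟨j, hjm, hocc⟩ := hUR m₀
      refine ⟨(fun i => y (i + (j - m₀))), ⟨j - m₀, rfl⟩, ?_⟩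
      intro i hiF
      have hiN : |i| ≤ (N:ℤ) := hN i hiF
      have hmem : i + (j - m₀) ∈ Finset.Icc (-((N:ℤ) + gp)) ((N:ℤ) + gp) := by
        rw [Finset.mem_Icc]
        rw [abs_le] at hiN
        rw [abs_le] at hjm
        omega
      have h1 : pt m₀ (i + (j - m₀)) = y (i + (j - m₀)) := hagree _ hmem
      show y (i + (j - m₀)) = om i
      rw [← h1]
      show om (i + (j - m₀) + m₀) = om i
      rw [show i + (j - m₀) + m₀ = i + j by ring]
      exact hocc i hiN
    have hcl : om ∈ closure {z : ℤ → Bool | ∃ t : ℤ, z = fun i => y (i + t)} :=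
      mem_closure_of_windows hwin
    have hsub : {z : ℤ → Bool | ∃ t : ℤ, z = fun i => y (i + t)} ⊆ Y := by
      rintro z ⟨t, rfl⟩
      exact shifts_mem hYs hy t
    exact (IsClosed.closure_subset_iff hYc).mpr hsub hcl
  have horb : orb ⊆ Y := by
    rintro z ⟨m, rfl⟩
    exact shifts_mem hYs hom m
  exact Set.Subset.antisymm hYX ((IsClosed.closure_subset_iff hYc).mpr horb)

lemma AP (p : ℤ) (hp : p ≠ 0) : ∃ m : ℤ, om (m + p) ≠ om m := by
  by_contra h
  push_neg at h
  have claim1 : ∀ γ : ℝ, bit 0 (γ + (p:ℝ)*al) = bit 0 γ := by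
    intro γ
    obtain ⟨m, k, hmk⟩ := approx {0, p} (by simp) γ
    have h0 := hmk 0 (by simp)
    have hpp := hmk p (by simp)
    have e1 : g 0 (γ + (p:ℝ)*al) = g p γ := by
      unfold g; congr 1; push_cast; ring
    have e2 : g m 0 = g 0 ((m:ℝ)*al) := by
      have := g_shift 0 m
      rw [zero_add] at this
      exact this
    have e3 : g (p + m) 0 = g p ((m:ℝ)*al) := g_shift p m
    calc bit 0 (γ + (p:ℝ)*al) = decide (Even (g p γ)) := by unfold bit; rw [e1]
    _ = decide (Even (g p ((m:ℝ)*al + k))) := by rw [hpp]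
    _ = decide (Even (g p ((m:ℝ)*al))) := by
        rw [g_add_int]
        congr 1
        simp [Int.even_add, Int.even_mul]
    _ = om (p + m) := by unfold om bit; rw [e3]
    _ = om (m + p) := by rw [add_comm]
    _ = om m := h m
    _ = decide (Even (g 0 ((m:ℝ)*al))) := by unfold om bit; rw [e2]
    _ = decide (Even (g 0 ((m:ℝ)*al + k))) := by
        rw [g_add_int]
        congr 1
        simp [Int.even_add, Int.even_mul]
    _ = bit 0 γ := by unfold bit; rw [h0]
  have claim2 : ∀ t : ℤ, ∀ k : ℤ, bit 0 ((t:ℝ)*((p:ℝ)*al) + k) = bit 0 0 := by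
    have claim2' : ∀ t : ℤ, bit 0 ((t:ℝ)*((p:ℝ)*al)) = bit 0 0 := by
      intro t
      induction t using Int.induction_on with
      | zero => norm_num
      | succ n ih =>
        rw [show (((n:ℤ)+1 : ℤ):ℝ)*((p:ℝ)*al) = ((n:ℤ):ℝ)*((p:ℝ)*al) + (p:ℝ)*al by push_cast; ring]
        rw [claim1]
        exact ih
      | pred n ih =>
        have h2 := claim1 (((-(n:ℤ)-1 : ℤ):ℝ)*((p:ℝ)*al))
        have harg : ((-(n:ℤ)-1 : ℤ):ℝ)*((p:ℝ)*al) + (p:ℝ)*al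
            = ((-(n:ℤ) : ℤ):ℝ)*((p:ℝ)*al) := by push_cast; ring
        rw [harg] at h2
        rw [h2] at ih
        exact ih
    intro t k
    rw [bit_add_int]
    exact claim2' t
  have hirr : Irrational ((p:ℝ)*al) := irr_al.intCast_mul hp
  obtain ⟨t, k, h12, h21⟩ := denseMK ((p:ℝ)*al) hirr (1/2) 1 (by norm_num)
  have hbit : bit 0 ((t:ℝ)*((p:ℝ)*al) + k) = bit 0 0 := claim2 t k
  have hg1 : g 0 ((t:ℝ)*((p:ℝ)*al) + k) = 1 := by
    unfold g
    rw [Int.floor_eq_iff]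
    constructor
    · push_cast; linarith
    · push_cast; linarith
  have hg0 : g 0 (0:ℝ) = 0 := by
    unfold g
    norm_num
  unfold bit at hbit
  rw [hg1, hg0] at hbit
  norm_num at hbit

lemma pt_inj : Function.Injective pt := by
  intro m₁ m₂ hpt
  by_contra hne
  obtain ⟨m, hm⟩ := AP (m₁ - m₂) (by omega)
  apply hm
  have hc := congrFun hpt (m - m₂)
  show om (m + (m₁ - m₂)) = om m
  have e1 : pt m₁ (m - m₂) = om (m + (m₁ - m₂)) :=
    congrArg om (by ring)
  have e2 : pt m₂ (m - m₂) = om m :=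
    congrArg om (by ring)
  rw [← e1, ← e2, hc]

lemma infinite_XX : XX.Infinite :=
  Set.infinite_of_injective_forall_mem pt_inj (fun m => subset_closure ⟨m, rfl⟩)

lemma word_mem_lang {n : ℕ} (hn : 1 ≤ n) (γ : ℝ) : word n γ ∈ Lang XX n := by
  have hne : (Finset.univ : Finset (Fin n)).Nonempty := ⟨⟨0, hn⟩, Finset.mem_univ _⟩
  have hFne : ((Finset.univ : Finset (Fin n)).image (fun j : Fin n => ((j:ℕ):ℤ))).Nonempty :=
    hne.image _
  obtain ⟨m, k, hmk⟩ := approx _ hFne γ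
  refine ⟨pt m, subset_closure ⟨m, rfl⟩, fun j => ?_⟩
  show bit ((j:ℕ):ℤ) γ = pt m ((j:ℕ):ℤ)
  show bit ((j:ℕ):ℤ) γ = om (((j:ℕ):ℤ) + m)
  rw [om_eq, ← bit_add_int _ ((m:ℝ)*al) k]
  unfold bit
  rw [hmk _ (Finset.mem_image_of_mem _ (Finset.mem_univ j))]

lemma lang_is_word {n : ℕ} {u : Fin n → Bool} (hu : u ∈ Lang XX n) :
    ∃ m : ℤ, u = word n ((m:ℝ)*al) := by
  obtain ⟨x, hx, hxu⟩ := hu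
  obtain ⟨s, hsorb, hagree⟩ := closure_window hx
    ((Finset.univ : Finset (Fin n)).image (fun j : Fin n => ((j:ℕ):ℤ)))
  rcases hsorb with ⟨m, rfl⟩
  refine ⟨m, funext fun j => ?_⟩
  rw [hxu j, ← hagree _ (Finset.mem_image_of_mem _ (Finset.mem_univ j))]
  show om (((j:ℕ):ℤ) + m) = word n ((m:ℝ)*al) j
  rw [om_eq]
  rfl

lemma lang_conn : LanguageConnected XX := by
  intro n hn u hu v hv
  obtain ⟨m₁, rfl⟩ := lang_is_word hu
  obtain ⟨m₂, rfl⟩ := lang_is_word hv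
  set γ₁ : ℝ := (m₁:ℝ)*al with hγ₁
  set γ₂ : ℝ := (m₂:ℝ)*al with hγ₂
  set kc : ℤ := ⌈γ₁ - γ₂⌉ with hkc
  have hle : γ₁ ≤ γ₂ + kc := by
    have := Int.le_ceil (γ₁ - γ₂)
    rw [← hkc] at this
    linarith
  have hw : word n (γ₂ + kc) = word n γ₂ := funext fun j => bit_add_int _ _ _
  have hKnn : (0:ℤ) ≤ ∑ j : Fin n, (g ((j:ℕ):ℤ) (γ₂ + kc) - g ((j:ℕ):ℤ) γ₁) :=
    Finset.sum_nonneg fun j _ => sub_nonneg.mpr (g_mono _ hle)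
  have hcon := conn n (Lang XX n) (fun γ => word_mem_lang hn γ)
    (∑ j : Fin n, (g ((j:ℕ):ℤ) (γ₂ + kc) - g ((j:ℕ):ℤ) γ₁)).toNat γ₁ (γ₂ + kc) hle
    (Int.toNat_of_nonneg hKnn).symm
  rw [hw] at hcon
  exact hcon

end RotEx

/-- There exists an infinite minimal language-connected subshift over `{0,1}`. -/
theorem exists_infinite_minimal_language_connected_subshift :
    ∃ X : Set (ℤ → Bool), IsMinimalSubshift X ∧ X.Infinite ∧ LanguageConnected X := by
  exact ⟨RotEx.XX, ⟨RotEx.isSubshift_XX, RotEx.minimal_XX⟩, RotEx.infinite_XX, RotEx.lang_conn⟩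
end
end

section
/- Let α ∈ (0,1) be irrational and let X_α be the Sturmian subshift of slope α. Then for every n ≥ 2, the 2-change graph of L_n(X_α) is connected. -/
/-- The `k`-fold shift (for `k : ℤ`): `(σ^k x) n = x (n + k)`. -/
def shiftIter (k : ℤ) (x : ℤ → Bool) : ℤ → Bool := fun n => x (n + k)

/-- The Sturmian sequence of slope `α`: `s_α(n) = ⌊(n+1)α⌋ − ⌊nα⌋` (as an element of `{0,1}`,
encoded by `Bool` with `true = 1`). -/
noncomputable def sturmianSeq (α : ℝ) : ℤ → Bool :=
  fun n => decide (⌊((n : ℝ) + 1) * α⌋ - ⌊(n : ℝ) * α⌋ = 1)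

/-- The Sturmian subshift of slope `α`: the closure of the shift orbit of `s_α`
in `{0,1}^ℤ` with the product topology. -/
noncomputable def sturmianSubshift (α : ℝ) : Set (ℤ → Bool) :=
  closure {y | ∃ k : ℤ, y = shiftIter k (sturmianSeq α)}

/-- Edge of the 2-change graph: `u ≠ v` and `u, v` agree outside a single contiguous
block of at most `2` positions (the block `{i, i+1}` for some `i`). -/
def TwoChangeEdge {n : ℕ} (u v : Fin n → Bool) : Prop :=
  u ≠ v ∧ ∃ i : ℕ, ∀ k : Fin n, ((k : ℕ) < i ∨ i + 2 ≤ (k : ℕ)) → u k = v k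

/-- A set of words is connected in its 2-change graph if any two of its elements are
joined by a path inside the set whose consecutive words are 2-change neighbours. -/
def TwoChangeConnected {n : ℕ} (L : Set (Fin n → Bool)) : Prop :=
  ∀ u ∈ L, ∀ v ∈ L,
    Relation.ReflTransGen (fun a b => a ∈ L ∧ b ∈ L ∧ TwoChangeEdge a b) u v

open scoped Classical

noncomputable def stWord (α : ℝ) (n : ℕ) (β : ℝ) : Fin n → Bool :=
  fun k => decide (⌊(((k : ℕ) + 1 : ℕ) : ℝ) * α + β⌋ - ⌊((k : ℕ) : ℝ) * α + β⌋ = 1)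

lemma intmul_ne {α : ℝ} (hirr : Irrational α) {d : ℤ} (hd : d ≠ 0) (e : ℤ) :
    (d : ℝ) * α ≠ (e : ℝ) := by
  intro h
  have hd' : (d : ℝ) ≠ 0 := Int.cast_ne_zero.mpr hd
  refine hirr ⟨(e : ℚ) / (d : ℚ), ?_⟩
  push_cast
  field_simp
  linarith [h]

lemma floor_eq_of_no_int {c β γ : ℝ} (h : β ≤ γ)
    (hno : ∀ m : ℤ, ¬ ((m : ℝ) - c ∈ Set.Ioc β γ)) : ⌊c + β⌋ = ⌊c + γ⌋ := by
  refine le_antisymm (Int.floor_le_floor (by linarith)) ?_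
  by_contra hlt
  push_neg at hlt
  have h1 : (⌊c + γ⌋ : ℝ) ≤ c + γ := Int.floor_le _
  have h2 : c + β < ⌊c + β⌋ + 1 := Int.lt_floor_add_one _
  have h3 : (⌊c + β⌋ : ℝ) + 1 ≤ (⌊c + γ⌋ : ℝ) := by exact_mod_cast hlt
  exact hno ⌊c + γ⌋ ⟨by linarith, by linarith⟩

lemma stWord_eq_of_no_break {α : ℝ} {n : ℕ} {β γ : ℝ}
    (hfl : ∀ k : ℕ, k ≤ n → ⌊(k : ℝ) * α + β⌋ = ⌊(k : ℝ) * α + γ⌋) :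
    stWord α n β = stWord α n γ := by
  funext k
  have hk := k.isLt
  simp only [stWord]
  rw [hfl ((k : ℕ) + 1) (by omega), hfl (k : ℕ) (by omega)]

lemma stWord_add_int (α : ℝ) (n : ℕ) (β : ℝ) (m : ℤ) :
    stWord α n (β + m) = stWord α n β := by
  funext k
  simp only [stWord, ← add_assoc, Int.floor_add_intCast, add_sub_add_right_eq_sub]

lemma orbit_word (α : ℝ) (n : ℕ) (k : ℤ) (j : Fin n) :
    shiftIter k (sturmianSeq α) ((j : ℕ) : ℤ) = stWord α n ((k : ℝ) * α) j := by
  simp only [shiftIter, sturmianSeq, stWord]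
  have e1 : (((((j : ℕ) : ℤ) + k : ℤ)) : ℝ) + 1 = ((((j : ℕ) + 1 : ℕ)) : ℝ) + (k : ℝ) := by
    push_cast; ring
  have e2 : ((((j : ℕ) : ℤ) + k : ℤ) : ℝ) = (((j : ℕ)) : ℝ) + (k : ℝ) := by push_cast; ring
  rw [e1, e2, add_mul, add_mul]

def orbitSubgroup (α : ℝ) : AddSubgroup ℝ where
  carrier := {r | ∃ k m : ℤ, r = k * α + m}
  zero_mem' := ⟨0, 0, by simp⟩
  add_mem' := by
    rintro a b ⟨k, m, rfl⟩ ⟨k', m', rfl⟩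
    exact ⟨k + k', m + m', by push_cast; ring⟩
  neg_mem' := by
    rintro a ⟨k, m, rfl⟩
    exact ⟨-k, -m, by push_cast; ring⟩

lemma orbitSubgroup_dense {α : ℝ} (hirr : Irrational α) :
    Dense ((orbitSubgroup α : Set ℝ)) := by
  rcases AddSubgroup.dense_or_cyclic (orbitSubgroup α) with h | ⟨a, ha⟩
  · exact h
  · exfalso
    have h1 : (1 : ℝ) ∈ orbitSubgroup α := ⟨0, 1, by push_cast; ring⟩
    have h2 : α ∈ orbitSubgroup α := ⟨1, 0, by push_cast; ring⟩
    rw [ha, AddSubgroup.mem_closure_singleton] at h1 h2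
    obtain ⟨z1, hz1⟩ := h1
    obtain ⟨z2, hz2⟩ := h2
    have hz1' : (z1 : ℝ) * a = 1 := by rw [← hz1]; simp [zsmul_eq_mul]
    have hz2' : (z2 : ℝ) * a = α := by rw [← hz2]; simp [zsmul_eq_mul]
    have hz1ne : z1 ≠ 0 := by
      rintro rfl
      simp at hz1'
    refine intmul_ne hirr hz1ne z2 ?_
    calc (z1 : ℝ) * α = (z1 : ℝ) * ((z2 : ℝ) * a) := by rw [hz2']
    _ = (z2 : ℝ) * ((z1 : ℝ) * a) := by ring
    _ = (z2 : ℝ) := by rw [hz1']; ring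

lemma stWord_mem_lang {α : ℝ} (hirr : Irrational α) (n : ℕ) (β : ℝ) :
    stWord α n β ∈ Lang (sturmianSubshift α) n := by
  set F : Finset ℝ :=
    (Finset.range (n + 1)).image
      (fun k : ℕ => ((⌊(k : ℝ) * α + β⌋ : ℝ) + 1) - ((k : ℝ) * α + β)) with hF
  have hFne : F.Nonempty := Finset.Nonempty.image ⟨0, Finset.mem_range.mpr (Nat.succ_pos n)⟩ _
  set δ := F.min' hFne with hδdef
  have hδ : 0 < δ := by
    obtain ⟨k, _, hkeq⟩ := Finset.mem_image.mp (F.min'_mem hFne)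
    rw [hδdef, ← hkeq]
    linarith [Int.lt_floor_add_one ((k : ℝ) * α + β)]
  obtain ⟨r, hrS, hr⟩ := (orbitSubgroup_dense hirr).exists_between
    (lt_add_of_pos_right β hδ)
  obtain ⟨k, m, rfl⟩ := hrS
  have heq1 : stWord α n β = stWord α n ((k : ℝ) * α + (m : ℝ)) := by
    apply stWord_eq_of_no_break
    intro t ht
    refine le_antisymm (Int.floor_le_floor (by linarith [hr.1])) ?_
    have hmemF : ((⌊(t : ℝ) * α + β⌋ : ℝ) + 1) - ((t : ℝ) * α + β) ∈ F :=
      Finset.mem_image_of_mem _ (Finset.mem_range.mpr (by omega))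
    have hle := F.min'_le _ hmemF
    have hlt : (t : ℝ) * α + ((k : ℝ) * α + (m : ℝ)) < (⌊(t : ℝ) * α + β⌋ : ℝ) + 1 := by
      have := hr.2
      rw [← hδdef] at hle
      linarith
    have : ⌊(t : ℝ) * α + ((k : ℝ) * α + (m : ℝ))⌋ < ⌊(t : ℝ) * α + β⌋ + 1 := by
      apply Int.floor_lt.mpr
      push_cast
      linarith
    omega
  have heq2 : stWord α n ((k : ℝ) * α + (m : ℝ)) = stWord α n ((k : ℝ) * α) :=
    stWord_add_int α n ((k : ℝ) * α) m
  refine ⟨shiftIter k (sturmianSeq α), subset_closure ⟨k, rfl⟩, ?_⟩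
  intro j
  rw [heq1, heq2, orbit_word]

lemma lang_sub {α : ℝ} {n : ℕ} {w : Fin n → Bool}
    (hw : w ∈ Lang (sturmianSubshift α) n) :
    ∃ β : ℝ, 0 ≤ β ∧ β < 1 ∧ w = stWord α n β := by
  obtain ⟨x, hx, hxw⟩ := hw
  have hopen : IsOpen {y : ℤ → Bool | ∀ j : Fin n, y ((j : ℕ) : ℤ) = x ((j : ℕ) : ℤ)} := by
    have he : {y : ℤ → Bool | ∀ j : Fin n, y ((j : ℕ) : ℤ) = x ((j : ℕ) : ℤ)} =
        ⋂ j : Fin n, (fun y : ℤ → Bool => y ((j : ℕ) : ℤ)) ⁻¹' {x ((j : ℕ) : ℤ)} := by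
      ext y; simp
    rw [he]
    exact isOpen_iInter_of_finite fun j =>
      (continuous_apply _).isOpen_preimage _ (isOpen_discrete _)
  obtain ⟨y, hy⟩ := mem_closure_iff.mp hx _ hopen (fun j => rfl)
  obtain ⟨k, rfl⟩ := hy.2
  refine ⟨Int.fract ((k : ℝ) * α), Int.fract_nonneg _, Int.fract_lt_one _, ?_⟩
  funext j
  have h1 : w j = stWord α n ((k : ℝ) * α) j := by
    rw [hxw j, ← hy.1 j, orbit_word]
  have h2 : (k : ℝ) * α = Int.fract ((k : ℝ) * α) + ((⌊(k : ℝ) * α⌋ : ℤ) : ℝ) := by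
    rw [Int.fract]; ring
  rw [h1]
  conv_lhs => rw [h2]
  exact congrFun (stWord_add_int α n (Int.fract ((k : ℝ) * α)) ⌊(k : ℝ) * α⌋) j

lemma stWord_eq_of_no_pt {α : ℝ} {n : ℕ} {β γ : ℝ} (hβ : 0 ≤ β) (hβγ : β ≤ γ) (hγ : γ < 1)
    (h : ∀ j : ℕ, j ≤ n → Int.fract (-(j : ℝ) * α) ∉ Set.Ioc β γ) :
    stWord α n β = stWord α n γ := by
  apply stWord_eq_of_no_break
  intro k hk
  apply floor_eq_of_no_int hβγ
  intro m hm
  apply h k hk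
  have h0 : (0 : ℝ) ≤ (m : ℝ) + (-(k : ℝ) * α) := by
    have := hm.1; linarith
  have h1 : (m : ℝ) + (-(k : ℝ) * α) < 1 := by
    have := hm.2; linarith
  have hfr : Int.fract (-(k : ℝ) * α) = (m : ℝ) - (k : ℝ) * α := by
    rw [show (m : ℝ) - (k : ℝ) * α = (m : ℝ) + (-(k : ℝ) * α) by ring,
      ← Int.fract_intCast_add m (-(k : ℝ) * α)]
    exact Int.fract_eq_self.mpr ⟨h0, h1⟩
  rw [hfr]
  exact hm

lemma key (α : ℝ) (hα0 : 0 < α) (hα1 : α < 1) (hirr : Irrational α) (n : ℕ) (hn : 1 ≤ n) :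
    ∀ N : ℕ, ∀ β γ : ℝ, 0 ≤ β → β ≤ γ → γ < 1 →
      (((Finset.range (n + 1)).image fun j : ℕ => Int.fract (-(j : ℝ) * α)).filter
        (fun q => q ∈ Set.Ioc β γ)).card ≤ N →
      Relation.ReflTransGen
        (fun a b => a ∈ Lang (sturmianSubshift α) n ∧ b ∈ Lang (sturmianSubshift α) n ∧
          TwoChangeEdge a b) (stWord α n β) (stWord α n γ) := by
  intro N
  induction N with
  | zero =>
    intro β γ hβ hβγ hγ hcard
    have hQ : (((Finset.range (n + 1)).image fun j : ℕ => Int.fract (-(j : ℝ) * α)).filter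
        (fun q => q ∈ Set.Ioc β γ)) = ∅ := Finset.card_eq_zero.mp (Nat.le_zero.mp hcard)
    have heq : stWord α n β = stWord α n γ := by
      apply stWord_eq_of_no_pt hβ hβγ hγ
      intro j hj hmem
      have : Int.fract (-(j : ℝ) * α) ∈ (((Finset.range (n + 1)).image
          fun j : ℕ => Int.fract (-(j : ℝ) * α)).filter (fun q => q ∈ Set.Ioc β γ)) :=
        Finset.mem_filter.mpr ⟨Finset.mem_image_of_mem _ (Finset.mem_range.mpr (by omega)), hmem⟩
      rw [hQ] at this
      exact absurd this (Finset.notMem_empty _)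
    rw [heq]
  | succ N ih =>
    intro β γ hβ hβγ hγ hcard
    set Q := (((Finset.range (n + 1)).image fun j : ℕ => Int.fract (-(j : ℝ) * α)).filter
        (fun q => q ∈ Set.Ioc β γ)) with hQdef
    by_cases hQ0 : Q = ∅
    · have heq : stWord α n β = stWord α n γ := by
        apply stWord_eq_of_no_pt hβ hβγ hγ
        intro j hj hmem
        have : Int.fract (-(j : ℝ) * α) ∈ Q :=
          Finset.mem_filter.mpr ⟨Finset.mem_image_of_mem _ (Finset.mem_range.mpr (by omega)), hmem⟩
        rw [hQ0] at this
        exact absurd this (Finset.notMem_empty _)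
      rw [heq]
    · have hQne : Q.Nonempty := Finset.nonempty_iff_ne_empty.mpr hQ0
      set p := Q.min' hQne with hpdef
      have hpQ : p ∈ Q := Q.min'_mem hQne
      have hpI : p ∈ Set.Ioc β γ := (Finset.mem_filter.mp hpQ).2
      obtain ⟨j, hjr, hj⟩ := Finset.mem_image.mp (Finset.mem_filter.mp hpQ).1
      have hjn : j ≤ n := by
        have := Finset.mem_range.mp hjr; omega
      have hp0 : 0 < p := lt_of_le_of_lt hβ hpI.1
      have hp1 : p < 1 := lt_of_le_of_lt hpI.2 hγ
      have hj0 : 1 ≤ j := by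
        by_contra hc
        have : j = 0 := by omega
        subst this
        simp at hj
        rw [← hj] at hp0
        exact lt_irrefl _ hp0
      set m : ℤ := -⌊-(j : ℝ) * α⌋ with hmdef
      have hm : (j : ℝ) * α + p = (m : ℝ) := by
        rw [← hj, Int.fract, hmdef]
        push_cast
        ring
      -- floors agree away from j
      have hA : ∀ k : ℕ, k ≤ n → k ≠ j → ⌊(k : ℝ) * α + β⌋ = ⌊(k : ℝ) * α + p⌋ := by
        intro k hk hkj
        apply floor_eq_of_no_int (le_of_lt hpI.1)
        intro m' hm'
        have h0 : (0 : ℝ) ≤ (m' : ℝ) + (-(k : ℝ) * α) := by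
          have := hm'.1; linarith
        have h1 : (m' : ℝ) + (-(k : ℝ) * α) < 1 := by
          have := hm'.2; linarith
        have hfr : Int.fract (-(k : ℝ) * α) = (m' : ℝ) - (k : ℝ) * α := by
          rw [show (m' : ℝ) - (k : ℝ) * α = (m' : ℝ) + (-(k : ℝ) * α) by ring,
            ← Int.fract_intCast_add m' (-(k : ℝ) * α)]
          exact Int.fract_eq_self.mpr ⟨h0, h1⟩
        have hqQ : Int.fract (-(k : ℝ) * α) ∈ Q := by
          refine Finset.mem_filter.mpr
            ⟨Finset.mem_image_of_mem _ (Finset.mem_range.mpr (by omega)), ?_⟩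
          rw [hfr]
          exact ⟨hm'.1, le_trans hm'.2 hpI.2⟩
        have hge : p ≤ Int.fract (-(k : ℝ) * α) := Q.min'_le _ hqQ
        have hle : Int.fract (-(k : ℝ) * α) ≤ p := by rw [hfr]; exact hm'.2
        have hqp : Int.fract (-(k : ℝ) * α) = p := le_antisymm hle hge
        -- deduce rational relation
        have : ((j : ℤ) - (k : ℤ) : ℝ) * α = ((m - m' : ℤ) : ℝ) := by
          rw [hfr] at hqp
          push_cast
          have : (m' : ℝ) - (k : ℝ) * α = (m : ℝ) - (j : ℝ) * α := by linarith [hm, hqp]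
          linarith
        have hdne : (j : ℤ) - (k : ℤ) ≠ 0 := by
          intro hc
          apply hkj
          omega
        exact absurd this (by exact_mod_cast intmul_ne hirr hdne (m - m'))
      have hB : ⌊(j : ℝ) * α + p⌋ = m := by
        rw [hm]; exact Int.floor_intCast m
      have hC : ⌊(j : ℝ) * α + β⌋ = m - 1 := by
        refine le_antisymm ?_ ?_
        · have : ⌊(j : ℝ) * α + β⌋ < m := Int.floor_lt.mpr (by
            have := hpI.1; linarith [hm])
          omega
        · apply Int.le_floor.mpr
          push_cast
          have : p - 1 ≤ β := by linarith
          linarith [hm]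
      set k₀ : Fin n := ⟨j - 1, by omega⟩ with hk₀
      have hk₀v : (k₀ : ℕ) = j - 1 := rfl
      have hsucc : (k₀ : ℕ) + 1 = j := by omega
      have hcast : ((j - 1 : ℕ) : ℝ) = (j : ℝ) - 1 := by
        rw [Nat.cast_sub hj0, Nat.cast_one]
      have hc' := hA (j - 1) (by omega) (by omega)
      have hc1 : ⌊((j - 1 : ℕ) : ℝ) * α + β⌋ ≤ m - 1 := by
        rw [← hC]
        apply Int.floor_le_floor
        rw [hcast]
        nlinarith [hα0.le]
      have hc2 : m ≤ ⌊((j - 1 : ℕ) : ℝ) * α + β⌋ + 1 := by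
        have h1 : m ≤ ⌊(((j - 1 : ℕ) : ℝ) * α + p) + 1⌋ := by
          rw [← hB]
          apply Int.floor_le_floor
          rw [hcast]
          nlinarith [hα1.le]
        rw [Int.floor_add_one, ← hc'] at h1
        exact h1
      have hu : stWord α n β k₀ = false := by
        simp only [stWord, decide_eq_false_iff_not, hk₀v]
        rw [show j - 1 + 1 = j by omega]
        omega
      have hv : stWord α n p k₀ = true := by
        simp only [stWord, decide_eq_true_eq, hk₀v]
        rw [show j - 1 + 1 = j by omega]
        omega
      have hne : stWord α n β ≠ stWord α n p := by
        intro h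
        have := congrFun h k₀
        rw [hu, hv] at this
        exact Bool.false_ne_true this
      have hagree : ∀ k : Fin n, ((k : ℕ) < j - 1 ∨ (j - 1) + 2 ≤ (k : ℕ)) →
          stWord α n β k = stWord α n p k := by
        intro k hk
        have hkn := k.isLt
        have hk1 : (k : ℕ) ≠ j := by omega
        have hk2 : (k : ℕ) + 1 ≠ j := by omega
        simp only [stWord]
        rw [hA ((k : ℕ) + 1) (by omega) hk2, hA (k : ℕ) (by omega) hk1]
      have hstep : stWord α n β ∈ Lang (sturmianSubshift α) n ∧
          stWord α n p ∈ Lang (sturmianSubshift α) n ∧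
          TwoChangeEdge (stWord α n β) (stWord α n p) :=
        ⟨stWord_mem_lang hirr n β, stWord_mem_lang hirr n p, hne, j - 1, hagree⟩
      have hcard' : (((Finset.range (n + 1)).image fun j : ℕ =>
          Int.fract (-(j : ℝ) * α)).filter (fun q => q ∈ Set.Ioc p γ)).card ≤ N := by
        have hsub : (((Finset.range (n + 1)).image fun j : ℕ =>
            Int.fract (-(j : ℝ) * α)).filter (fun q => q ∈ Set.Ioc p γ)) ⊆ Q.erase p := by
          intro q hq
          rw [Finset.mem_filter] at hq
          rw [Finset.mem_erase, hQdef, Finset.mem_filter]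
          exact ⟨ne_of_gt hq.2.1, hq.1, lt_trans hpI.1 hq.2.1, hq.2.2⟩
        have h1 := Finset.card_le_card hsub
        have h2 := Finset.card_erase_of_mem hpQ
        have h3 : 1 ≤ Q.card := Finset.card_pos.mpr hQne
        omega
      exact Relation.ReflTransGen.head hstep (ih p γ (le_of_lt hp0) hpI.2 hγ hcard')

/-- For a Sturmian subshift of irrational slope `α ∈ (0,1)`, the 2-change graph of the
language of words of length `n` is connected for every `n ≥ 2`. -/
theorem sturmian_two_change_connected (α : ℝ) (hα0 : 0 < α) (hα1 : α < 1)
    (hirr : Irrational α) (n : ℕ) (hn : 2 ≤ n) :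
    TwoChangeConnected (Lang (sturmianSubshift α) n) := by
  have hn1 : 1 ≤ n := by omega
  intro u hu v hv
  obtain ⟨β₁, hβ₁0, hβ₁1, rfl⟩ := lang_sub hu
  obtain ⟨β₂, hβ₂0, hβ₂1, rfl⟩ := lang_sub hv
  have hsymm : Symmetric (fun a b : Fin n → Bool =>
      a ∈ Lang (sturmianSubshift α) n ∧ b ∈ Lang (sturmianSubshift α) n ∧
        TwoChangeEdge a b) := by
    rintro a b ⟨ha, hb, hne, i, hag⟩
    exact ⟨hb, ha, hne.symm, i, fun k hk => (hag k hk).symm⟩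
  rcases le_total β₁ β₂ with h | h
  · exact key α hα0 hα1 hirr n hn1 _ β₁ β₂ hβ₁0 h hβ₂1 le_rfl
  · exact (@Relation.ReflTransGen.symmetric _ _ ⟨fun a b hab => hsymm hab⟩).symm _ _
      (key α hα0 hα1 hirr n hn1 _ β₂ β₁ hβ₂0 h hβ₁1 le_rfl)
end

section
/- Let α ∈ (0,1) be irrational and let X_α be the Sturmian subshift of slope α. For β ∈ ℝ and n ≥ 1, let w(β, n) ∈ {0,1}^n be the word with k-th letter ⌊(k+1)α + β⌋ − ⌊kα + β⌋ for 0 ≤ k < n. Then for every n ≥ 1, the language L_n(X_α) equals { w(β, n) : β ∈ [0,1) }. -/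
/-- The mechanical word `w(β, n)` of slope `α` and intercept `β`:
its `k`-th letter is `⌊(k+1)α + β⌋ − ⌊kα + β⌋` for `0 ≤ k < n`. -/
noncomputable def mechanicalWord (α β : ℝ) (n : ℕ) : Fin n → Bool :=
  fun k => decide (⌊((k : ℝ) + 1) * α + β⌋ - ⌊(k : ℝ) * α + β⌋ = 1)


-- floor shift lemma
lemma floor_shift (α : ℝ) (m k : ℤ) :
    ⌊((m + k : ℤ) : ℝ) * α⌋ = ⌊(m : ℝ) * α + Int.fract ((k : ℝ) * α)⌋ + ⌊(k : ℝ) * α⌋ := by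
  have h : ((m + k : ℤ) : ℝ) * α = ((m : ℝ) * α + Int.fract ((k : ℝ) * α)) + (⌊(k : ℝ) * α⌋ : ℤ) := by
    have := Int.fract_add_floor ((k : ℝ) * α)
    push_cast
    linarith
  rw [h, Int.floor_add_intCast]

-- density of fractional parts
lemma exists_fract_mem (α : ℝ) (hirr : Irrational α) {β ε : ℝ}
    (hβ0 : 0 ≤ β) (hβ1 : β < 1) (hε : 0 < ε) :
    ∃ k : ℤ, β ≤ Int.fract ((k : ℝ) * α) ∧ Int.fract ((k : ℝ) * α) < β + ε := by
  set S := AddSubgroup.closure ({1, α} : Set ℝ) with hS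
  have hd : Dense (S : Set ℝ) := by
    rcases S.dense_or_cyclic with h | ⟨a, ha⟩
    · exact h
    · exfalso
      have h1 : (1 : ℝ) ∈ S := AddSubgroup.subset_closure (by simp)
      have hα : α ∈ S := AddSubgroup.subset_closure (by simp)
      rw [ha, AddSubgroup.mem_closure_singleton] at h1 hα
      obtain ⟨m, hm⟩ := h1
      obtain ⟨l, hl⟩ := hα
      have hm0 : (m : ℝ) ≠ 0 := by
        intro h0
        rw [zsmul_eq_mul, h0, zero_mul] at hm
        exact one_ne_zero hm.symm
      have ha0 : a = 1 / (m : ℝ) := by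
        field_simp
        rw [← hm, zsmul_eq_mul]; ring
      have : α = (l : ℝ) / (m : ℝ) := by
        rw [← hl, zsmul_eq_mul, ha0]; ring
      exact hirr ⟨(l : ℚ) / (m : ℚ), by push_cast [this]; norm_num⟩
  have hlt : β < min (β + ε) 1 := lt_min (by linarith) hβ1
  obtain ⟨g, hgS, hg1, hg2⟩ := hd.exists_between hlt
  rw [SetLike.mem_coe, hS, AddSubgroup.mem_closure_pair] at hgS
  obtain ⟨m, k, hmk⟩ := hgS
  have hg0 : 0 < g := lt_of_le_of_lt hβ0 hg1
  have hglt1 : g < 1 := lt_of_lt_of_le hg2 (min_le_right _ _)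
  refine ⟨k, ?_, ?_⟩
  · have : Int.fract ((k : ℝ) * α) = g := by
      have : (k : ℝ) * α = g + (-m : ℤ) := by
        rw [← hmk]; push_cast [zsmul_eq_mul]; ring
      rw [this, Int.fract_add_intCast, Int.fract_eq_self.mpr ⟨le_of_lt hg0, hglt1⟩]
    rw [this]; exact le_of_lt hg1
  · have : Int.fract ((k : ℝ) * α) = g := by
      have : (k : ℝ) * α = g + (-m : ℤ) := by
        rw [← hmk]; push_cast [zsmul_eq_mul]; ring
      rw [this, Int.fract_add_intCast, Int.fract_eq_self.mpr ⟨le_of_lt hg0, hglt1⟩]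
    rw [this]; exact lt_of_lt_of_le hg2 (min_le_left _ _)

lemma shift_letter (α : ℝ) (k m : ℤ) :
    shiftIter k (sturmianSeq α) m
      = decide (⌊((m : ℝ) + 1) * α + Int.fract ((k : ℝ) * α)⌋
          - ⌊(m : ℝ) * α + Int.fract ((k : ℝ) * α)⌋ = 1) := by
  have h1 := floor_shift α (m + 1) k
  have h2 := floor_shift α m k
  simp only [shiftIter, sturmianSeq]
  have e1 : ((m + k : ℤ) : ℝ) + 1 = ((m + 1 + k : ℤ) : ℝ) := by push_cast; ring
  have e2 : ((m + 1 : ℤ) : ℝ) = (m : ℝ) + 1 := by push_cast; ring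
  rw [e2] at h1
  rw [show (((m + k : ℤ) : ℝ) + 1) * α = ((m + 1 + k : ℤ) : ℝ) * α by rw [e1]]
  rw [h1, h2]
  simp only [decide_eq_decide]
  omega

/-- The length-`n` language of a Sturmian subshift of irrational slope `α ∈ (0,1)`
is exactly the set of mechanical words `w(β, n)` with `β ∈ [0,1)`. -/
theorem sturmian_language_eq_mechanical_words (α : ℝ) (hα0 : 0 < α) (hα1 : α < 1)
    (hirr : Irrational α) (n : ℕ) (hn : 1 ≤ n) :
    Lang (sturmianSubshift α) n
      = {w | ∃ β : ℝ, 0 ≤ β ∧ β < 1 ∧ w = mechanicalWord α β n} := by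
  ext w
  constructor
  · rintro ⟨x, hx, hw⟩
    set U : Set (ℤ → Bool) := {y | ∀ j : Fin n, y ((j : ℕ) : ℤ) = x ((j : ℕ) : ℤ)} with hUdef
    have hU : IsOpen U := by
      have : U = ⋂ j : Fin n, (fun y : ℤ → Bool => y ((j : ℕ) : ℤ)) ⁻¹' {x ((j : ℕ) : ℤ)} := by
        ext y; simp [hUdef, Set.mem_iInter]
      rw [this]
      exact isOpen_iInter_of_finite fun j =>
        (continuous_apply _).isOpen_preimage _ (isOpen_discrete _)
    obtain ⟨y, hyU, hyS⟩ := mem_closure_iff.mp hx U hU (fun j => rfl)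
    obtain ⟨k, rfl⟩ := hyS
    refine ⟨Int.fract ((k : ℝ) * α), Int.fract_nonneg _, Int.fract_lt_one _, ?_⟩
    funext j
    rw [hw j, ← hyU j, shift_letter, mechanicalWord]
    push_cast
    rfl
  · rintro ⟨β, hβ0, hβ1, rfl⟩
    obtain ⟨j₀, hj₀, hmin⟩ := Finset.exists_min_image (Finset.range (n + 1))
      (fun j : ℕ => ((⌊(j : ℝ) * α + β⌋ : ℝ) + 1) - ((j : ℝ) * α + β)) ⟨0, by simp⟩
    set ε : ℝ := ((⌊(j₀ : ℝ) * α + β⌋ : ℝ) + 1) - ((j₀ : ℝ) * α + β) with hεdef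
    have hε : 0 < ε := sub_pos.mpr (Int.lt_floor_add_one ((j₀ : ℝ) * α + β))
    obtain ⟨k, hk1, hk2⟩ := exists_fract_mem α hirr hβ0 hβ1 hε
    refine ⟨shiftIter k (sturmianSeq α), subset_closure ⟨k, rfl⟩, ?_⟩
    have key : ∀ t : ℕ, t ≤ n → ⌊(t : ℝ) * α + Int.fract ((k : ℝ) * α)⌋ = ⌊(t : ℝ) * α + β⌋ := by
      intro t ht
      have hmt := hmin t (Finset.mem_range.mpr (Nat.lt_succ_of_le ht))
      rw [Int.floor_eq_iff]
      constructor
      · have := Int.floor_le ((t : ℝ) * α + β)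
        linarith
      · push_cast
        linarith
    intro j
    rw [shift_letter, mechanicalWord]
    have h1 : ⌊((j : ℝ) + 1) * α + Int.fract ((k : ℝ) * α)⌋ = ⌊((j : ℝ) + 1) * α + β⌋ := by
      have := key (j + 1) j.2
      push_cast at this ⊢
      convert this using 3 <;> ring
    have h2 : ⌊((j : ℝ)) * α + Int.fract ((k : ℝ) * α)⌋ = ⌊(j : ℝ) * α + β⌋ := key j (le_of_lt j.2)
    push_cast
    rw [h1, h2]
end

section
/- Let X be a subshift over {0,1} and n ≥ 1. If L_{n+1}(X) is Hamming-connected, then L_n(X) is Hamming-connected. Consequently, if for every n there exists m ≥ n such that L_m(X) is Hamming-connected, then X is language-connected. -/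
lemma restrict_mem {X : Set (ℤ → Bool)} {n : ℕ} {w : Fin (n + 1) → Bool}
    (h : w ∈ Lang X (n + 1)) : (fun k : Fin n => w k.castSucc) ∈ Lang X n := by
  obtain ⟨x, hx, hw⟩ := h
  exact ⟨x, hx, fun k => by simpa using hw k.castSucc⟩

lemma extend_mem {X : Set (ℤ → Bool)} {n : ℕ} {u : Fin n → Bool}
    (h : u ∈ Lang X n) :
    ∃ w ∈ Lang X (n + 1), (fun k : Fin n => w k.castSucc) = u := by
  obtain ⟨x, hx, hu⟩ := h
  refine ⟨fun k : Fin (n + 1) => x ((k : ℕ) : ℤ), ⟨x, hx, fun _ => rfl⟩, ?_⟩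
  funext k
  simpa using (hu k).symm

lemma restrict_dist {n : ℕ} (a b : Fin (n + 1) → Bool) :
    hammingDist (fun k : Fin n => a k.castSucc) (fun k : Fin n => b k.castSucc)
      ≤ hammingDist a b := by
  classical
  unfold hammingDist
  apply Finset.card_le_card_of_injOn Fin.castSucc
  · intro k hk
    simp only [Finset.mem_coe, Finset.mem_filter, Finset.mem_univ, true_and] at hk ⊢
    exact hk
  · exact fun x _ y _ h => Fin.castSucc_injective _ h

lemma step_down (X : Set (ℤ → Bool)) :
    ∀ n : ℕ, HammingConnected (Lang X (n + 1)) → HammingConnected (Lang X n) := by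
  intro n hc u hu v hv
  obtain ⟨wu, hwu, hru⟩ := extend_mem hu
  obtain ⟨wv, hwv, hrv⟩ := extend_mem hv
  have key : ∀ a b : Fin (n + 1) → Bool,
      Relation.ReflTransGen
        (fun a b => a ∈ Lang X (n + 1) ∧ b ∈ Lang X (n + 1) ∧ hammingDist a b = 1) a b →
      Relation.ReflTransGen
        (fun a b => a ∈ Lang X n ∧ b ∈ Lang X n ∧ hammingDist a b = 1)
        (fun k => a k.castSucc) (fun k => b k.castSucc) := by
    intro a b h
    induction h with
    | refl => exact .refl
    | @tail p q _ hstep ih =>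
      obtain ⟨h1, h2, h3⟩ := hstep
      have hle : hammingDist (fun k : Fin n => p k.castSucc)
          (fun k : Fin n => q k.castSucc) ≤ 1 := h3 ▸ restrict_dist p q
      rcases Nat.le_one_iff_eq_zero_or_eq_one.mp hle with h0 | h1'
      · have : (fun k : Fin n => p k.castSucc) = fun k : Fin n => q k.castSucc :=
          hammingDist_eq_zero.mp h0
        exact this ▸ ih
      · exact ih.tail ⟨restrict_mem h1, restrict_mem h2, h1'⟩
  have := key wu wv (hc wu hwu wv hwv)
  rwa [hru, hrv] at this

/-- Hamming-connectivity passes from length `n+1` down to length `n`; consequently a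
subshift whose languages are Hamming-connected for arbitrarily large lengths is
language-connected. -/
theorem hammingConnected_of_succ (X : Set (ℤ → Bool)) (hX : IsSubshift X) :
    (∀ n : ℕ, 1 ≤ n → HammingConnected (Lang X (n + 1)) → HammingConnected (Lang X n)) ∧
    ((∀ n : ℕ, ∃ m : ℕ, n ≤ m ∧ HammingConnected (Lang X m)) → LanguageConnected X) := by
  constructor
  · intro n _ hc
    exact step_down X n hc
  · intro h n hn
    obtain ⟨m, hnm, hcm⟩ := h n
    have down : ∀ m : ℕ, HammingConnected (Lang X m) → ∀ k : ℕ, k ≤ m →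
        HammingConnected (Lang X k) := by
      intro m
      induction m with
      | zero => intro hc k hk; rw [Nat.le_zero.mp hk]; exact hc
      | succ m ih =>
        intro hc k hk
        rcases Nat.lt_or_ge k (m + 1) with h' | h'
        · exact ih (step_down X m hc) k (Nat.lt_succ_iff.mp h')
        · have : k = m + 1 := le_antisymm hk h'
          rw [this]; exact hc
    exact down m hcm n hnm
end

section
/- Let n ≥ 1, ℓ ≥ 1, and let w_0, …, w_{n−1} ∈ {0,1}^ℓ satisfy H(w_j, w_{j+1}) = 1 for all 0 ≤ j ≤ n−2 and H(w_0 · 0, 0 · w_{n−1}) = 1, where H denotes Hamming distance and · denotes concatenation. Then for every j ∈ {0, …, n−1} there is a sequence v_0, v_1, …, v_n of words in {0,1}^{ℓ+1} with v_0 = 0 · w_j, v_n = w_j · 0, H(v_t, v_{t+1}) = 1 for every 0 ≤ t ≤ n−1, and every v_t of the form 0 · w_s or w_s · 0 for some s ∈ {0, …, n−1}. -/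
/-!
If `w_0, …, w_{n−1} ∈ {0,1}^ℓ` form a Hamming path with the wrap-around property
`H(w_0·0, 0·w_{n−1}) = 1`, then for each `j` the word `0·w_j` can be transformed into
`w_j·0` by `n` single-letter changes, passing only through words of the form `0·w_s`
or `w_s·0`.
-/

/-- Hamming distance between two binary words (of equal length) given as lists:
the number of positions where they differ. -/
def hammingL (u v : List Bool) : ℕ :=
  (List.zipWith (fun a b => if a = b then 0 else 1) u v).sum

lemma hammingL_comm (u v : List Bool) : hammingL u v = hammingL v u := by
  induction u generalizing v with
  | nil => cases v <;> simp [hammingL]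
  | cons a u ih =>
    cases v with
    | nil => simp [hammingL]
    | cons b v =>
      simp only [hammingL, List.zipWith_cons_cons, List.sum_cons]
      rw [show (List.zipWith (fun a b => if a = b then 0 else 1) u v).sum = hammingL u v from rfl,
        show (List.zipWith (fun a b => if a = b then 0 else 1) v u).sum = hammingL v u from rfl,
        ih v]
      congr 1
      by_cases h : a = b <;> simp [h, Ne.symm, eq_comm]

lemma hammingL_cons (a : Bool) (u v : List Bool) :
    hammingL (a :: u) (a :: v) = hammingL u v := by
  simp [hammingL]

lemma hammingL_append_right (u v : List Bool) (x : Bool) (h : u.length = v.length) :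
    hammingL (u ++ [x]) (v ++ [x]) = hammingL u v := by
  simp [hammingL, List.zipWith_append h]

theorem rotate_around_hamming_cycle (n ℓ : ℕ) (hn : 1 ≤ n) (hℓ : 1 ≤ ℓ)
    (w : ℕ → List Bool) (hlen : ∀ j < n, (w j).length = ℓ)
    -- `H(w_j, w_{j+1}) = 1` for all `0 ≤ j ≤ n−2`
    (hpath : ∀ j : ℕ, j + 2 ≤ n → hammingL (w j) (w (j + 1)) = 1)
    -- `H(w_0 · 0, 0 · w_{n−1}) = 1`
    (hwrap : hammingL (w 0 ++ [false]) ([false] ++ w (n - 1)) = 1) :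
    ∀ j < n, ∃ v : ℕ → List Bool,
      v 0 = [false] ++ w j ∧
      v n = w j ++ [false] ∧
      (∀ t < n, hammingL (v t) (v (t + 1)) = 1) ∧
      (∀ t ≤ n, ∃ s < n, v t = [false] ++ w s ∨ v t = w s ++ [false]) := by
  intro j hj
  refine ⟨fun t => if t < n - j then [false] ++ w (j + t) else w (t - (n - j)) ++ [false],
    ?_, ?_, ?_, ?_⟩
  · simp [Nat.sub_pos_of_lt hj]
  · have h1 : ¬ n < n - j := by omega
    have h2 : n - (n - j) = j := by omega
    simp [h1, h2]
  · intro t ht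
    by_cases h1 : t + 1 < n - j
    · have h0 : t < n - j := by omega
      simp only [if_pos h0, if_pos h1]
      rw [show j + (t + 1) = (j + t) + 1 from rfl, List.singleton_append,
        List.singleton_append, hammingL_cons]
      exact hpath (j + t) (by omega)
    · by_cases h0 : t < n - j
      · -- t + 1 = n - j, the wrap step
        have ht1 : t + 1 = n - j := by omega
        have hjt : j + t = n - 1 := by omega
        have hsub : t + 1 - (n - j) = 0 := by omega
        simp only [if_pos h0, if_neg h1, hjt, hsub]
        rw [hammingL_comm]
        exact hwrap
      · have h2 : t + 1 - (n - j) = (t - (n - j)) + 1 := by omega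
        simp only [if_neg h0, if_neg h1, h2]
        rw [hammingL_append_right _ _ _ (by
          rw [hlen _ (by omega), hlen _ (by omega)])]
        exact hpath (t - (n - j)) (by omega)
  · intro t ht
    by_cases h0 : t < n - j
    · exact ⟨j + t, by omega, Or.inl (by simp [h0])⟩
    · exact ⟨t - (n - j), by omega, Or.inr (by simp [h0])⟩
end

section
/- Let n ≥ 2, ℓ ≥ 1, and let w_0, …, w_{n−1} ∈ {0,1}^ℓ satisfy H(w_j, w_{j+1}) = 1 for all 0 ≤ j ≤ n−2 and H(w_0 · 0, 0 · w_{n−1}) = 1. Let k ≥ 1, let h_0, …, h_{k−1} ∈ {0, …, n−1}, and set u = w_{h_0} w_{h_1} ⋯ w_{h_{k−1}}. Then there exists a sequence v_0, v_1, …, v_{n(k+2)−1} of words in {0,1}^{(k+2)ℓ+1} such that v_0 = w_0 · 0 · u · w_0, v_{n(k+2)−1} = w_{n−1} · u · w_0 · 0, H(v_t, v_{t+1}) = 1 for all 0 ≤ t ≤ n(k+2)−2, and H(v_0 · 0, 0 · v_{n(k+2)−1}) = 1. Moreover, if for all j, j' ∈ {0, …, n−1} there exist indices t, t' with |t − t'|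 ≥ 2 such that (h_t, h_{t+1}) = (j, j') and (h_{t'}, h_{t'+1}) = (j, j'), then every word v_s in the sequence contains every word of {w_j w_{j'} : 0 ≤ j, j' ≤ n−1} as a factor. -/
namespace HCIS

lemma hammingL_self (a : List Bool) : hammingL a a = 0 := by
  induction a with
  | nil => rfl
  | cons x t ih => simpa [hammingL] using ih

lemma hammingL_comm (a b : List Bool) : hammingL a b = hammingL b a := by
  induction a generalizing b with
  | nil => cases b <;> rfl
  | cons x t ih =>
    cases b with
    | nil => rfl
    | cons y s => simp [hammingL] at ih ⊢; rw [ih]; congr 1; by_cases hxy : x = y <;> simp [hxy, eq_comm]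

lemma hammingL_append (a b c d : List Bool) (h : a.length = c.length) :
    hammingL (a ++ b) (c ++ d) = hammingL a c + hammingL b d := by
  unfold hammingL
  rw [List.zipWith_append h, List.sum_append]

lemma hammingL_cons (x : Bool) (a b : List Bool) : hammingL (x :: a) (x :: b) = hammingL a b := by
  simp [hammingL]

lemma hammingL_middle (a b b' c : List Bool) (h : b.length = b'.length) :
    hammingL (a ++ (b ++ c)) (a ++ (b' ++ c)) = hammingL b b' := by
  rw [hammingL_append _ _ _ _ rfl, hammingL_append _ _ _ _ h, hammingL_self, hammingL_self]
  omega

def blk (w : ℕ → List Bool) (H : ℕ → ℕ) (a m : ℕ) : List Bool :=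
  ((List.range' a m).map fun t => w (H t)).flatten

def mid (w : ℕ → List Bool) (n b r : ℕ) : List Bool :=
  if r + b < n then false :: w (b + r) else w (r + b - n) ++ [false]

def WW (w : ℕ → List Bool) (H : ℕ → ℕ) (n k i r : ℕ) : List Bool :=
  w (n-1) ++ blk w H 0 i ++ mid w n (H i) r ++ blk w H (i+1) (k - i)

def vv (w : ℕ → List Bool) (H : ℕ → ℕ) (n k s : ℕ) : List Bool :=
  if s < n then w s ++ [false] ++ blk w H 0 (k+1)
  else WW w H n k (min ((s - (n-1)) / n) k) ((s - (n-1)) - (min ((s - (n-1)) / n) k) * n)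

variable (w : ℕ → List Bool) (H : ℕ → ℕ) (n ℓ k : ℕ)

lemma blk_succ (a m : ℕ) : blk w H a (m+1) = w (H a) ++ blk w H (a+1) m := by
  simp [blk, List.range'_succ]

lemma blk_concat (a m : ℕ) : blk w H a (m+1) = blk w H a m ++ w (H (a+m)) := by
  simp [blk, List.range'_concat]

lemma blk_split (a m t : ℕ) (h1 : a ≤ t) (h2 : t + 1 < a + m) :
    blk w H a m = blk w H a (t-a) ++ (w (H t) ++ w (H (t+1))) ++ blk w H (t+2) (a + m - (t+2)) := by
  have e1 : List.range' a (t-a) ++ List.range' t 2 ++ List.range' (t+2) (a+m-(t+2)) = List.range' a m := by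
    rw [show List.range' t 2 = List.range' (a + 1*(t-a)) 2 by congr 1; omega,
      List.range'_append, show List.range' (t+2) (a+m-(t+2)) = List.range' (a + 1*((t-a)+2)) (a+m-(t+2)) by congr 1; omega,
      List.range'_append]
    congr 1; omega
  rw [blk, ← e1]
  simp [blk, List.range']

lemma blk_infix (a m t : ℕ) (h1 : a ≤ t) (h2 : t + 1 < a + m) :
    (w (H t) ++ w (H (t+1))) <:+: blk w H a m := by
  rw [blk_split w H a m t h1 h2]
  exact List.infix_append _ _ _

lemma blk_length (hlen : ∀ j < n, (w j).length = ℓ) (hH : ∀ t, H t < n) (a m : ℕ) :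
    (blk w H a m).length = m * ℓ := by
  induction m generalizing a with
  | zero => simp [blk]
  | succ m ih => rw [blk_succ]; simp [ih (a+1), hlen _ (hH a)]; ring

lemma mid_length (hlen : ∀ j < n, (w j).length = ℓ) (b r : ℕ) (hb : b < n) (hr : r ≤ n) :
    (mid w n b r).length = ℓ + 1 := by
  unfold mid
  split
  · simp [hlen _ (by omega : b + r < n)]
  · simp [hlen _ (by omega : r + b - n < n)]

lemma WW_length (hlen : ∀ j < n, (w j).length = ℓ) (hH : ∀ t, H t < n)
    (i r : ℕ) (hi : i ≤ k) (hr : r ≤ n) :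
    (WW w H n k i r).length = (k+2) * ℓ + 1 := by
  have hn0 : 0 < n := Nat.lt_of_le_of_lt (Nat.zero_le _) (hH 0)
  have e : i * ℓ + (k - i) * ℓ = k * ℓ := by rw [← add_mul]; congr 1; omega
  have e3 : (k+2) * ℓ = k * ℓ + 2 * ℓ := by ring
  unfold WW
  rw [List.length_append, List.length_append, List.length_append,
    blk_length w H n ℓ hlen hH, blk_length w H n ℓ hlen hH,
    mid_length w n ℓ hlen _ _ (hH i) hr, hlen _ (by omega : n - 1 < n)]
  omega

lemma WW_rep (hH : ∀ t, H t < n) (i : ℕ) (hik : i < k) :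
    WW w H n k i n = WW w H n k (i+1) 0 := by
  unfold WW mid
  rw [if_neg (by omega), if_pos (by have := hH (i+1); omega)]
  rw [show n + H i - n = H i by omega]
  rw [blk_concat w H 0 i]
  rw [show k - i = (k - (i+1)) + 1 by omega, blk_succ]
  simp

lemma vv_rep (hn : 2 ≤ n) (hH : ∀ t, H t < n) (q : ℕ) :
    vv w H n k (n-1+q) = WW w H n k (min (q/n) k) (q - min (q/n) k * n) := by
  rcases Nat.eq_zero_or_pos q with hq | hq
  · subst hq
    have h1 : n - 1 + 0 < n := by omega
    simp only [vv, if_pos h1, Nat.add_zero, Nat.sub_self, Nat.zero_div, Nat.zero_sub]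
    rw [show min 0 k = 0 by omega]
    unfold WW
    rw [blk_succ w H 0 k]
    simp [blk, mid, hH 0]
  · have h1 : ¬ (n - 1 + q < n) := by omega
    simp only [vv, if_neg h1]
    have : n - 1 + q - (n-1) = q := by omega
    rw [this]

lemma WW_step (hlen : ∀ j < n, (w j).length = ℓ)
    (hpath : ∀ j : ℕ, j + 2 ≤ n → hammingL (w j) (w (j + 1)) = 1)
    (hwrap : hammingL (w 0 ++ [false]) ([false] ++ w (n - 1)) = 1)
    (hH : ∀ t, H t < n) (hn : 2 ≤ n)
    (i r : ℕ) (hi : i ≤ k) (hr : r < n) :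
    hammingL (WW w H n k i r) (WW w H n k i (r+1)) = 1 := by
  have hb : H i < n := hH i
  have e : ∀ r', WW w H n k i r' =
      (w (n-1) ++ blk w H 0 i) ++ (mid w n (H i) r' ++ blk w H (i+1) (k-i)) := by
    intro r'; simp [WW]
  rw [e, e, hammingL_middle _ _ _ _
    (by rw [mid_length w n ℓ hlen _ _ hb (by omega), mid_length w n ℓ hlen _ _ hb (by omega)])]
  set b := H i with hbdef
  unfold mid
  by_cases h1 : r + 1 + b < n
  · rw [if_pos (by omega), if_pos h1, hammingL_cons]
    rw [show b + (r+1) = (b + r) + 1 by omega]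
    exact hpath (b + r) (by omega)
  · by_cases h2 : r + b < n
    · rw [if_pos h2, if_neg h1]
      rw [show b + r = n - 1 by omega, show r + 1 + b - n = 0 by omega]
      rw [hammingL_comm]
      simpa using hwrap
    · rw [if_neg h2, if_neg h1]
      rw [hammingL_append _ _ _ _ (by rw [hlen _ (by omega), hlen _ (by omega)])]
      rw [show r + 1 + b - n = (r + b - n) + 1 by omega]
      rw [hpath _ (by omega)]
      simp [hammingL]

end HCIS

open HCIS in
theorem hamming_cycle_inductive_step (n ℓ k : ℕ) (hn : 2 ≤ n) (hℓ : 1 ≤ ℓ) (hk : 1 ≤ k)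
    (w : ℕ → List Bool) (hlen : ∀ j < n, (w j).length = ℓ)
    -- `H(w_j, w_{j+1}) = 1` for all `0 ≤ j ≤ n−2`
    (hpath : ∀ j : ℕ, j + 2 ≤ n → hammingL (w j) (w (j + 1)) = 1)
    -- `H(w_0 · 0, 0 · w_{n−1}) = 1`
    (hwrap : hammingL (w 0 ++ [false]) ([false] ++ w (n - 1)) = 1)
    (h : ℕ → ℕ) (hh : ∀ t < k, h t < n) :
    ∃ v : ℕ → List Bool,
      (∀ t ≤ n * (k + 2) - 1, (v t).length = (k + 2) * ℓ + 1) ∧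
      v 0 = w 0 ++ [false] ++ (((List.range k).map fun t => w (h t)).flatten) ++ w 0 ∧
      v (n * (k + 2) - 1)
        = w (n - 1) ++ (((List.range k).map fun t => w (h t)).flatten) ++ w 0 ++ [false] ∧
      (∀ t : ℕ, t + 1 ≤ n * (k + 2) - 1 → hammingL (v t) (v (t + 1)) = 1) ∧
      hammingL (v 0 ++ [false]) ([false] ++ v (n * (k + 2) - 1)) = 1 ∧
      -- genericity of `h` implies every word on the path contains every `w_j ++ w_j'`
      ((∀ j < n, ∀ j' < n, ∃ t t' : ℕ, t + 1 < k ∧ t' + 1 < k ∧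
          (t + 2 ≤ t' ∨ t' + 2 ≤ t) ∧
          h t = j ∧ h (t + 1) = j' ∧ h t' = j ∧ h (t' + 1) = j') →
        ∀ s ≤ n * (k + 2) - 1, ∀ j < n, ∀ j' < n, (w j ++ w j') <:+: v s) := by
  have hn0 : 0 < n := by omega
  set H : ℕ → ℕ := fun t => if t < k then h t else 0 with hHdef
  have hH : ∀ t, H t < n := by
    intro t; by_cases ht : t < k
    · simpa [hHdef, ht] using hh t ht
    · simp [hHdef, ht]; omega
  have hHk : H k = 0 := by simp [hHdef]
  have hHh : ∀ t < k, H t = h t := fun t ht => by simp [hHdef, ht]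
  have hprod2 : n * (k+2) = n*k + 2*n := by ring
  have hprod1 : n * (k+1) = n*k + n := by ring
  have hkn : k * n = n * k := Nat.mul_comm k n
  have hbF : blk w H 0 k = ((List.range k).map fun t => w (h t)).flatten := by
    unfold blk
    rw [List.range_eq_range']
    congr 1
    apply List.map_congr_left
    intro x hx
    have hxk : x < k := by have := List.mem_range'_1.mp hx; omega
    simp [hHdef, hxk]
  have hblk1 : blk w H 0 (k+1) = ((List.range k).map fun t => w (h t)).flatten ++ w 0 := by
    rw [blk_concat w H 0 k, hbF]
    simp [hHk]
  have hv0 : vv w H n k 0 = w 0 ++ [false] ++ (((List.range k).map fun t => w (h t)).flatten) ++ w 0 := by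
    unfold vv
    rw [if_pos (by omega : (0:ℕ) < n), hblk1]
    simp [List.append_assoc]
  have hvlast : vv w H n k (n*(k+2)-1)
      = w (n-1) ++ (((List.range k).map fun t => w (h t)).flatten) ++ w 0 ++ [false] := by
    rw [show n*(k+2)-1 = n - 1 + n*(k+1) by omega]
    rw [vv_rep w H n k hn hH (n*(k+1))]
    rw [Nat.mul_div_cancel_left (k+1) hn0]
    rw [min_eq_right (Nat.le_succ k)]
    rw [show n*(k+1) - k*n = n by omega]
    unfold WW
    rw [Nat.sub_self k, hHk]
    rw [show mid w n 0 n = w 0 ++ [false] by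
      unfold mid; rw [if_neg (by omega)]; congr 2; omega]
    rw [hbF]
    simp [blk]
  refine ⟨vv w H n k, ?_, hv0, hvlast, ?_, ?_, ?_⟩
  · -- lengths
    intro t ht
    by_cases htn : t < n
    · unfold vv
      rw [if_pos htn]
      rw [List.length_append, List.length_append, blk_length w H n ℓ hlen hH, hlen t htn]
      have e1 : (k+1)*ℓ = k*ℓ + ℓ := by ring
      have e2 : (k+2)*ℓ = k*ℓ + 2*ℓ := by ring
      simp
      omega
    · rw [show t = n - 1 + (t - (n-1)) by omega, vv_rep w H n k hn hH]
      set q := t - (n-1) with hqdef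
      apply WW_length w H n ℓ k hlen hH _ _ (min_le_right _ _)
      rcases le_or_gt (q/n) k with hik | hik
      · rw [min_eq_left hik]
        have h1 := Nat.div_add_mod q n
        have h2 := Nat.mod_lt q hn0
        have h3 : q/n * n = n * (q/n) := Nat.mul_comm _ _
        omega
      · rw [min_eq_right (le_of_lt hik)]
        omega
  · -- steps
    intro t ht
    rcases lt_or_ge (t+1) n with h1 | h1
    · unfold vv
      rw [if_pos (by omega : t < n), if_pos h1]
      rw [hammingL_append _ _ _ _ (by simp [hlen t (by omega), hlen (t+1) (by omega)]),
        hammingL_append _ _ _ _ (by rw [hlen t (by omega), hlen (t+1) (by omega)]),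
        hammingL_self, hammingL_self, hpath t (by omega)]
    · have hc : n * (k+2) - 1 = n*k + 2*n - 1 := by rw [hprod2]
      rw [hc] at ht
      set q := t - (n-1) with hqdef
      have hq1 : t = n - 1 + q := by omega
      have hq2 : t + 1 = n - 1 + (q+1) := by omega
      have hqb : q + 1 ≤ n * (k+1) := by omega
      obtain ⟨i, hidef⟩ : ∃ i, q / n = i := ⟨_, rfl⟩
      obtain ⟨r, hrdef⟩ : ∃ r, q % n = r := ⟨_, rfl⟩
      have hdm : n * i + r = q := by rw [← hidef, ← hrdef]; exact Nat.div_add_mod q n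
      have hrn : r < n := by rw [← hrdef]; exact Nat.mod_lt q hn0
      have hik : i ≤ k := by
        by_contra hcon
        push_neg at hcon
        have := Nat.mul_le_mul_left n (show k + 1 ≤ i by omega)
        omega
      have hin : i * n = n * i := Nat.mul_comm _ _
      have hrepl : vv w H n k t = WW w H n k i r := by
        rw [hq1, vv_rep w H n k hn hH, hidef, min_eq_left hik]
        rw [show q - i*n = r by omega]
      have hrepr : vv w H n k (t+1) = WW w H n k i (r+1) := by
        rw [hq2, vv_rep w H n k hn hH]
        rcases lt_or_ge (r+1) n with hr1 | hr1
        · have hdiv : (q+1)/n = i := by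
            rw [show q+1 = n*i + (r+1) by omega, Nat.mul_add_div hn0,
              Nat.div_eq_of_lt hr1, Nat.add_zero]
          rw [hdiv, min_eq_left hik]
          rw [show q + 1 - i*n = r+1 by omega]
        · have hrn' : r + 1 = n := by omega
          rcases lt_or_ge i k with hikl | hikg
          · have he1 : n*(i+1) = n*i + n := by ring
            have hdiv : (q+1)/n = i+1 := by
              rw [show q+1 = n*(i+1) by omega, Nat.mul_div_cancel_left _ hn0]
            have he2 : (i+1)*n = n*i + n := by ring
            rw [hdiv, min_eq_left (by omega), show q + 1 - (i+1)*n = 0 by omega]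
            rw [← WW_rep w H n k hH i hikl, hrn']
          · have hieq : i = k := by omega
            have he1 : n*(k+1) = n*k + n := by ring
            have he2 : n*i = n*k := by rw [hieq]
            have hdiv : (q+1)/n = k+1 := by
              rw [show q+1 = n*(k+1) by omega, Nat.mul_div_cancel_left _ hn0]
            rw [hdiv, min_eq_right (by omega), show q + 1 - k*n = r+1 by omega, hieq]
      rw [hrepl, hrepr]
      exact WW_step w H n ℓ k hlen hpath hwrap hH hn i r hik hrn
  · -- wrap
    rw [hv0, hvlast]
    rw [show w 0 ++ [false] ++ (((List.range k).map fun t => w (h t)).flatten) ++ w 0 ++ [false]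
        = (w 0 ++ [false]) ++ ((((List.range k).map fun t => w (h t)).flatten) ++ (w 0 ++ [false]))
        by simp [List.append_assoc]]
    rw [show [false] ++ (w (n-1) ++ (((List.range k).map fun t => w (h t)).flatten) ++ w 0 ++ [false])
        = ([false] ++ w (n-1)) ++ ((((List.range k).map fun t => w (h t)).flatten) ++ (w 0 ++ [false]))
        by simp [List.append_assoc]]
    rw [hammingL_append _ _ _ _ (by simp [hlen 0 (by omega), hlen (n-1) (by omega)])]
    rw [hammingL_self, hwrap]
  · -- factors
    intro hgen s hs j hj j' hj'
    obtain ⟨t, t', htk, htk', hsep, e1, e2, e3, e4⟩ := hgen j hj j' hj'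
    have hemb : ∀ (A B X : List Bool), X <:+: B → X <:+: A ++ B :=
      fun A B X hx => hx.trans (List.suffix_append A B).isInfix
    have hemb2 : ∀ (B C X : List Bool), X <:+: B → X <:+: B ++ C :=
      fun B C X hx => hx.trans (List.prefix_append B C).isInfix
    have key : ∀ o, o + 1 < k → h o = j → h (o+1) = j' →
        ∀ a m, a ≤ o → o + 1 < a + m → (w j ++ w j') <:+: blk w H a m := by
      intro o ho hj1 hj2 a m ham1 ham2
      have := blk_infix w H a m o ham1 ham2
      rwa [hHh o (by omega), hHh (o+1) ho, hj1, hj2] at this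
    by_cases hsn : s < n
    · unfold vv
      rw [if_pos hsn]
      exact hemb _ _ _ (key t htk e1 e2 0 (k+1) (Nat.zero_le _) (by omega))
    · push_neg at hsn
      rw [show s = n - 1 + (s - (n-1)) by omega, vv_rep w H n k hn hH]
      set i := min ((s - (n-1))/n) k with hidef
      have hik : i ≤ k := min_le_right _ _
      have hchoice : (t+2 ≤ i ∨ i+1 ≤ t) ∨ (t'+2 ≤ i ∨ i+1 ≤ t') := by omega
      have hoc : ∃ o, o + 1 < k ∧ h o = j ∧ h (o+1) = j' ∧ (o + 2 ≤ i ∨ i + 1 ≤ o) := by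
        rcases hchoice with hc | hc
        · exact ⟨t, htk, e1, e2, hc⟩
        · exact ⟨t', htk', e3, e4, hc⟩
      obtain ⟨o, hok, ho1, ho2, hcase⟩ := hoc
      unfold WW
      rcases hcase with hc | hc
      · exact hemb2 _ _ _ (hemb2 _ _ _ (hemb _ _ _
          (key o hok ho1 ho2 0 i (Nat.zero_le _) (by omega))))
      · exact hemb _ _ _ (key o hok ho1 ho2 (i+1) (k-i) (by omega) (by omega))
end

section
/- Let (W_i)_{i≥0} be a sequence of nonempty finite sets of nonempty words over {0,1} such that: (i) for every i ≥ 0 and every m > i there exists k ≥ 1 such that every word of W_m belongs to (W_i · {ε, 0, 00})^{k−1} · W_i · {ε, 0}; and (ii) for every i ≥ 0, every word of W_i · W_i is a factor of every word of W_{i+1}. Then the set X = {x ∈ {0,1}^ℤ : every finite factor of x is a factor of some word in ∪_i W_i} is a nonempty minimal subshift. -/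
/-- Concatenation of languages: `A · B = {u ++ v : u ∈ A, v ∈ B}`. -/
def lmul (A B : Set (List Bool)) : Set (List Bool) :=
  {w | ∃ u ∈ A, ∃ v ∈ B, w = u ++ v}

/-- Concatenation power of a language: `A^0 = {ε}`, `A^{k+1} = A · A^k`. -/
def lpow (A : Set (List Bool)) : ℕ → Set (List Bool)
  | 0 => {[]}
  | k + 1 => lmul A (lpow A k)

/-- The finite word `u` occurs as a (contiguous) factor of the bi-infinite sequence `x`. -/
def FactorOfPoint (u : List Bool) (x : ℤ → Bool) : Prop :=
  ∃ a : ℤ, ∀ t : Fin u.length, u.get t = x (a + (t : ℕ))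



/-- If `s ++ f ++ t = p ++ m ++ r` with `|s| ≤ |p|` and `|p| + |m| ≤ |s| + |f|`,
then `m` is an infix of `f`. -/
lemma middle_infix {s f t p m r : List Bool}
    (h : s ++ f ++ t = p ++ m ++ r) (h1 : s.length ≤ p.length)
    (h2 : p.length + m.length ≤ s.length + f.length) : m <:+: f := by
  set d := p.length - s.length with hd
  have hdf : d ≤ f.length := by omega
  have key : m = (f.drop d).take m.length := by
    have e1 : (p ++ (m ++ r)).drop p.length = m ++ r := List.drop_left
    have e2 : (s ++ (f ++ t)).drop s.length = f ++ t := List.drop_left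
    have h' : s ++ (f ++ t) = p ++ (m ++ r) := by simpa [List.append_assoc] using h
    have e3 : (s ++ (f ++ t)).drop p.length = m ++ r := by rw [h']; exact e1
    have e4 : (s ++ (f ++ t)).drop p.length
        = ((s ++ (f ++ t)).drop s.length).drop d := by
      rw [List.drop_drop]; congr 1; omega
    rw [e4, e2] at e3
    have e5 : (f ++ t).drop d = f.drop d ++ t.drop (d - f.length) := by
      rw [List.drop_append]
    have e6 : d - f.length = 0 := by omega
    rw [e5, e6, List.drop_zero] at e3
    have e7 : (f.drop d ++ t).take m.length
        = (f.drop d).take m.length ++ t.take (m.length - (f.drop d).length) := by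
      rw [List.take_append]
    have e8 : m.length - (f.drop d).length = 0 := by
      simp [List.length_drop]; omega
    have e9 : (m ++ r).take m.length = m := List.take_left
    rw [← e3] at e9
    rw [e7, e8, List.take_zero, List.append_nil] at e9
    exact e9.symm
  rw [key]
  exact ((List.take_prefix _ _).isInfix).trans (List.drop_suffix _ _).isInfix

/-- Pointwise criterion for being an infix. -/
lemma infix_of_getElem {u v : List Bool} {o : ℕ} (ho : o + u.length ≤ v.length)
    (h : ∀ (i : ℕ) (hi : i < u.length),
      u[i] = v[o + i]'(by omega)) : u <:+: v := by
  have key : u = (v.drop o).take u.length := by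
    apply List.ext_getElem
    · simp; omega
    · intro i hi hi2
      rw [List.getElem_take, List.getElem_drop]
      exact h i hi
  rw [key]
  exact ((List.take_prefix _ _).isInfix).trans (List.drop_suffix _ _).isInfix

/-- Every word in `(B·G)^n · (B·G')` starts with a block of `B`. -/
lemma first_block {B G G' : Set (List Bool)} :
    ∀ (n : ℕ) (w : List Bool), w ∈ lmul (lpow (lmul B G) n) (lmul B G') →
      ∃ b ∈ B, ∃ r, w = b ++ r := by
  intro n w hw
  obtain ⟨q, hq, c, hc, rfl⟩ := hw
  obtain ⟨b, hb, g, hg, rfl⟩ := hc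
  cases n with
  | zero =>
    have hq' : q = [] := hq
    subst hq'
    exact ⟨b, hb, g, by simp⟩
  | succ k =>
    obtain ⟨a, ha, q', hq', rfl⟩ := hq
    obtain ⟨b0, hb0, g0, hg0, rfl⟩ := ha
    exact ⟨b0, hb0, g0 ++ q' ++ (b ++ g), by simp⟩

/-- Any sufficiently long factor of a word in `(B·G)^n · (B·G')` contains a full block of `B`. -/
lemma block_in_factor {B G G' : Set (List Bool)} {L : ℕ}
    (hB : ∀ b ∈ B, b.length ≤ L) (hG : ∀ g ∈ G, g.length ≤ 2)
    (hG' : ∀ g ∈ G', g.length ≤ 1) :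
    ∀ (n : ℕ) (w f : List Bool), w ∈ lmul (lpow (lmul B G) n) (lmul B G') → f <:+: w →
      2 * L + 2 ≤ f.length → ∃ b ∈ B, b <:+: f := by
  intro n
  induction n with
  | zero =>
    intro w f hw hf hlen
    obtain ⟨q, hq, c, hc, rfl⟩ := hw
    obtain ⟨b, hb, g, hg, rfl⟩ := hc
    have hq' : q = [] := hq
    subst hq'
    have h1 := hf.length_le
    have h2 := hB b hb
    have h3 := hG' g hg
    simp [List.length_append] at h1
    omega
  | succ n ih =>
    intro w f hw hf hlen
    obtain ⟨q, hq, c, hc, rfl⟩ := hw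
    obtain ⟨a, ha, q', hq', rfl⟩ := hq
    have hw' : q' ++ c ∈ lmul (lpow (lmul B G) n) (lmul B G') := ⟨q', hq', c, hc, rfl⟩
    obtain ⟨s, t, hst⟩ := hf
    obtain ⟨b0, hb0, g0, hg0, rfl⟩ := ha
    have hst' : s ++ (f ++ t) = (b0 ++ g0) ++ (q' ++ c) := by
      simpa [List.append_assoc] using hst
    by_cases hcase : (b0 ++ g0).length ≤ s.length
    · apply ih (q' ++ c) f hw' _ hlen
      have e1 : ((b0 ++ g0) ++ (q' ++ c)).drop (b0 ++ g0).length = q' ++ c :=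
        List.drop_left
      rw [← hst', List.drop_append,
        Nat.sub_eq_zero_of_le hcase, List.drop_zero] at e1
      exact ⟨s.drop (b0 ++ g0).length, t, by rw [← e1]; simp [List.append_assoc]⟩
    · push_neg at hcase
      obtain ⟨b1, hb1, r, hr⟩ := first_block n (q' ++ c) hw'
      have heq : s ++ f ++ t = (b0 ++ g0) ++ b1 ++ r := by
        rw [hst]; simp only [List.append_assoc]; rw [hr]
      refine ⟨b1, hb1, middle_infix heq (by omega) ?_⟩
      have h2 := hB b0 hb0
      have h3 := hG g0 hg0
      have h4 := hB b1 hb1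
      simp [List.length_append]
      omega

lemma factorOfPoint_of_infix {u f : List Bool} {x : ℤ → Bool}
    (huf : u <:+: f) (hf : FactorOfPoint f x) : FactorOfPoint u x := by
  obtain ⟨s, t, rfl⟩ := huf
  obtain ⟨a, ha⟩ := hf
  refine ⟨a + s.length, fun i => ?_⟩
  have hidx : s.length + (i : ℕ) < (s ++ u ++ t).length := by
    have := i.isLt
    simp [List.length_append]; omega
  have h0 := ha ⟨s.length + i, hidx⟩
  simp only [List.get_eq_getElem] at h0 ⊢
  have e : (s ++ u ++ t)[s.length + (i : ℕ)]'hidx = u[(i : ℕ)] := by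
    have h1 : s.length + (i : ℕ) < (s ++ u).length := by
      simp [List.length_append]
    rw [List.getElem_append_left h1, List.getElem_append_right (Nat.le_add_right _ _)]
    simp
  refine e.symm.trans (h0.trans ?_)
  congr 1
  push_cast
  ring

lemma factorOfPoint_ofFn (x : ℤ → Bool) (a : ℤ) (n : ℕ) :
    FactorOfPoint (List.ofFn fun t : Fin n => x (a + (t : ℕ))) x := by
  refine ⟨a, fun t => ?_⟩
  simp only [List.get_eq_getElem, List.getElem_ofFn]

/-- Infix extraction from pointwise agreement inside a doubled word. -/
lemma infix_of_pointwise {u v : List Bool} {x : ℤ → Bool} {a : ℤ} {o : ℕ}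
    (ho : o + u.length ≤ v.length)
    (hx : ∀ t : Fin u.length, u.get t = x (a + (t : ℕ)))
    (hv : ∀ (i : ℕ) (hi : i < u.length), x (a + (i : ℕ)) = v[o + i]'(by omega)) :
    u <:+: v := by
  refine infix_of_getElem ho fun i hi => ?_
  have := hx ⟨i, hi⟩
  simp only [List.get_eq_getElem] at this
  rw [this]
  exact hv i hi

theorem minimal_subshift_from_hierarchy (W : ℕ → Set (List Bool))
    (hne : ∀ i, (W i).Nonempty) (hfin : ∀ i, (W i).Finite)
    (hwords : ∀ i, ∀ u ∈ W i, u ≠ [])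
    -- (i): decomposition of higher levels over level `i` with gaps `ε`, `0` or `00`
    -- and trailing gap `ε` or `0`
    (hdecomp : ∀ i m : ℕ, i < m → ∃ k : ℕ, 1 ≤ k ∧
      W m ⊆ lmul (lpow (lmul (W i) ({[], [false], [false, false]} : Set (List Bool)))
                    (k - 1))
              (lmul (W i) ({[], [false]} : Set (List Bool))))
    -- (ii): every word of `W_i · W_i` is a factor of every word of `W_{i+1}`
    (hfac : ∀ i, ∀ u ∈ lmul (W i) (W i), ∀ v ∈ W (i + 1), u <:+: v) :
    IsMinimalSubshift
      {x : ℤ → Bool | ∀ u : List Bool, FactorOfPoint u x → ∃ i, ∃ v ∈ W i, u <:+: v} := by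
  set X := {x : ℤ → Bool | ∀ u : List Bool, FactorOfPoint u x → ∃ i, ∃ v ∈ W i, u <:+: v}
    with hXdef
  -- Lifting factors to higher levels
  have lift : ∀ j m u, j ≤ m → (∃ v ∈ W j, u <:+: v) → ∃ v ∈ W m, u <:+: v := by
    intro j m u hjm
    induction m, hjm using Nat.le_induction with
    | base => exact id
    | succ n hn ih =>
      intro h
      obtain ⟨v, hv, huv⟩ := ih h
      obtain ⟨v', hv'⟩ := hne n
      obtain ⟨z, hz⟩ := hne (n + 1)
      have h1 : v ++ v' <:+: z := hfac n (v ++ v') ⟨v, hv, v', hv', rfl⟩ z hz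
      exact ⟨z, hz, (huv.trans (v.prefix_append v').isInfix).trans h1⟩
  -- Uniform occurrence: a word occurring at some level occurs in every long enough factor
  have key : ∀ u i, (∃ v ∈ W i, u <:+: v) → ∃ N : ℕ, ∀ f : List Bool,
      N ≤ f.length → (∃ m, ∃ w ∈ W m, f <:+: w) → u <:+: f := by
    intro u i hu
    set L := (hfin (i + 1)).toFinset.sup List.length with hLdef
    have hL : ∀ b ∈ W (i + 1), b.length ≤ L := fun b hb =>
      Finset.le_sup ((hfin (i + 1)).mem_toFinset.mpr hb)
    refine ⟨2 * L + 2, fun f hflen hfex => ?_⟩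
    obtain ⟨m, w, hwm, hfw⟩ := hfex
    obtain ⟨w', hw', hfw'⟩ := lift m (max m (i + 2)) f (le_max_left _ _) ⟨w, hwm, hfw⟩
    have him : i + 1 < max m (i + 2) := lt_of_lt_of_le (by omega) (le_max_right _ _)
    obtain ⟨k, hk1, hksub⟩ := hdecomp (i + 1) (max m (i + 2)) him
    have hmem := hksub hw'
    have hG : ∀ g ∈ ({[], [false], [false, false]} : Set (List Bool)), g.length ≤ 2 := by
      intro g hg
      simp only [Set.mem_insert_iff, Set.mem_singleton_iff] at hg
      rcases hg with rfl | rfl | rfl <;> simp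
    have hG' : ∀ g ∈ ({[], [false]} : Set (List Bool)), g.length ≤ 1 := by
      intro g hg
      simp only [Set.mem_insert_iff, Set.mem_singleton_iff] at hg
      rcases hg with rfl | rfl <;> simp
    obtain ⟨b, hb, hbf⟩ := block_in_factor hL hG hG' (k - 1) w' f hmem hfw' hflen
    obtain ⟨v, hv, huv⟩ := hu
    obtain ⟨v', hv'⟩ := hne i
    have h1 : v ++ v' <:+: b := hfac i (v ++ v') ⟨v, hv, v', hv', rfl⟩ b hb
    exact ((huv.trans (v.prefix_append v').isInfix).trans h1).trans hbf
  -- X is closed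
  have hclosed : IsClosed X := by
    have hXeq : X = ⋂ (u : List Bool) (_ : ¬ ∃ i, ∃ v ∈ W i, u <:+: v),
        {x : ℤ → Bool | FactorOfPoint u x}ᶜ := by
      ext x
      simp only [hXdef, Set.mem_iInter, Set.mem_compl_iff, Set.mem_setOf_eq]
      constructor
      · intro h u hnu hf; exact hnu (h u hf)
      · intro h u hf; by_contra hnu; exact h u hnu hf
    rw [hXeq]
    refine isClosed_iInter fun u => isClosed_iInter fun _ => ?_
    rw [isClosed_compl_iff]
    have : {x : ℤ → Bool | FactorOfPoint u x} = ⋃ a : ℤ, ⋂ t : Fin u.length,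
        {x : ℤ → Bool | x (a + (t : ℕ)) = u.get t} := by
      ext x
      simp only [Set.mem_setOf_eq, Set.mem_iUnion, Set.mem_iInter, FactorOfPoint, eq_comm]
    rw [this]
    refine isOpen_iUnion fun a => isOpen_iInter_of_finite fun t => ?_
    exact (continuous_apply (A := fun _ : ℤ => Bool) (a + (t : ℕ))).isOpen_preimage
      {u.get t} (isOpen_discrete _)
  -- X is shift invariant
  have hinv : shiftMap '' X = X := by
    apply Set.Subset.antisymm
    · rintro _ ⟨x, hx, rfl⟩ u ⟨a, ha⟩
      exact hx u ⟨a + 1, fun t => (ha t).trans (congrArg x (by omega))⟩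
    · intro x hx
      refine ⟨fun n => x (n - 1), ?_, ?_⟩
      · rintro u ⟨a, ha⟩
        exact hx u ⟨a - 1, fun t => (ha t).trans (congrArg x (by omega))⟩
      · funext n
        show x (n + 1 - 1) = x n
        congr 1
        omega
  -- X is nonempty
  have hXne : X.Nonempty := by
    choose w hw using hne
    have hdoub : ∀ n, w n ++ w n <:+: w (n + 1) := fun n =>
      hfac n (w n ++ w n) ⟨w n, hw n, w n, hw n, rfl⟩ (w (n + 1)) (hw (n + 1))
    have hlen : ∀ n, n + 1 ≤ (w n).length := by
      intro n
      induction n with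
      | zero => exact List.length_pos_iff.mpr (hwords 0 (w 0) (hw 0))
      | succ n ih =>
        have h2 := (hdoub n).length_le
        simp only [List.length_append] at h2
        omega
    set xs : ℕ → (ℤ → Bool) :=
      fun n t => (w n ++ w n).getD (t + ((w n).length : ℤ)).toNat false with hxs
    obtain ⟨x, hx⟩ := exists_clusterPt_of_compactSpace (Filter.map xs Filter.atTop)
    have hmcp : MapClusterPt x Filter.atTop xs := hx
    refine ⟨x, ?_⟩
    rintro u ⟨a, ha⟩
    set F : Finset ℤ := Finset.image (fun t : ℕ => a + t) (Finset.range u.length) with hF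
    set V : Set (ℤ → Bool) := {y | ∀ s ∈ F, y s = x s} with hV
    have hVopen : IsOpen V := by
      have : V = Set.pi ↑F (fun s => {x s}) := by
        ext y; simp [hV, Set.mem_pi]
      rw [this]
      exact isOpen_set_pi F.finite_toSet fun i _ => isOpen_discrete _
    have hVmem : V ∈ nhds x := hVopen.mem_nhds fun s hs => rfl
    have hfreq : ∃ᶠ n in Filter.atTop, xs n ∈ V := mapClusterPt_iff_frequently.mp hmcp V hVmem
    obtain ⟨n, hnV, hnN⟩ :=
      (hfreq.and_eventually (Filter.eventually_ge_atTop (a.natAbs + u.length))).exists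
    have hWl := hlen n
    set Wl := (w n).length with hWldef
    have hge : (a.natAbs + u.length) + 1 ≤ Wl := le_trans (by omega) hWl
    have hpos : 0 ≤ a + (Wl : ℤ) := by omega
    set o : ℕ := (a + (Wl : ℤ)).toNat with ho
    have hov : o + u.length ≤ (w n ++ w n).length := by
      simp only [List.length_append, ← hWldef]; omega
    have huin : u <:+: w n ++ w n := by
      refine infix_of_pointwise hov ha fun i hi => ?_
      have hmemF : a + (i : ℕ) ∈ F := by
        rw [hF]; exact Finset.mem_image.mpr ⟨i, Finset.mem_range.mpr hi, rfl⟩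
      have h1 : xs n (a + (i : ℕ)) = x (a + (i : ℕ)) := hnV _ hmemF
      rw [← h1, hxs]
      have hidx : (a + (i : ℕ) + (Wl : ℤ)).toNat = o + i := by omega
      have hlt : o + i < (w n ++ w n).length := by omega
      simp only [← hWldef, hidx]
      exact List.getD_eq_getElem _ _ hlt
    exact ⟨n + 1, w (n + 1), hw (n + 1), huin.trans (hdoub n)⟩
  -- every admissible word occurs in every point of X
  have hXfull : ∀ y ∈ X, ∀ u : List Bool,
      (∃ i, ∃ v ∈ W i, u <:+: v) → FactorOfPoint u y := by
    rintro y hy u ⟨i, hu⟩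
    obtain ⟨N, hN⟩ := key u i hu
    have hfy : FactorOfPoint (List.ofFn fun t : Fin N => y (0 + (t : ℕ))) y :=
      factorOfPoint_ofFn y 0 N
    have hflen : (List.ofFn fun t : Fin N => y (0 + (t : ℕ))).length = N := by simp
    have hfW := hy _ hfy
    have huf := hN _ (by omega) hfW
    exact factorOfPoint_of_infix huf hfy
  refine ⟨⟨hXne, hclosed, hinv⟩, fun Y hYX hYclosed hYinv hYne => ?_⟩
  obtain ⟨y0, hy0⟩ := hYne
  apply Set.Subset.antisymm hYX
  intro x hx
  -- Y is closed under all integer shifts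
  have hfwd : ∀ y ∈ Y, (fun s => y (s + 1)) ∈ Y := by
    intro y hy
    have : shiftMap y ∈ shiftMap '' Y := ⟨y, hy, rfl⟩
    rwa [hYinv] at this
  have hbwd : ∀ y ∈ Y, (fun s => y (s - 1)) ∈ Y := by
    intro y hy
    rw [← hYinv] at hy
    obtain ⟨y', hy', rfl⟩ := hy
    have : (fun s : ℤ => shiftMap y' (s - 1)) = y' := by
      funext s; show y' (s - 1 + 1) = y' s; congr 1; omega
    rwa [this]
  have hshift : ∀ c : ℤ, ∀ y ∈ Y, (fun s => y (s + c)) ∈ Y := by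
    intro c
    induction c using Int.induction_on with
    | zero => intro y hy; simpa using hy
    | succ k ih =>
      intro y hy
      have h1 := hfwd _ (ih y hy)
      have h2 : (fun s : ℤ => (fun s' : ℤ => y (s' + k)) (s + 1))
          = fun s : ℤ => y (s + (k + 1)) := by
        funext s; show y (s + 1 + k) = y (s + (k + 1)); congr 1; omega
      rwa [h2] at h1
    | pred k ih =>
      intro y hy
      have h1 := hbwd _ (ih y hy)
      have h2 : (fun s : ℤ => (fun s' : ℤ => y (s' + -(k : ℤ))) (s - 1))
          = fun s : ℤ => y (s + (-(k : ℤ) - 1)) := by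
        funext s; show y (s - 1 + -(k : ℤ)) = y (s + (-(k : ℤ) - 1)); congr 1; omega
      rwa [h2] at h1
  -- central words of x occur in y0
  have hfp : ∀ n : ℕ, ∃ a : ℤ, ∀ (t : ℕ), t < 2 * n + 1 →
      x (-(n : ℤ) + (t : ℕ)) = y0 (a + (t : ℕ)) := by
    intro n
    obtain ⟨a, ha⟩ := hXfull y0 (hYX hy0)
      (List.ofFn fun t : Fin (2 * n + 1) => x (-(n : ℤ) + (t : ℕ)))
      (hx _ (factorOfPoint_ofFn x (-(n : ℤ)) (2 * n + 1)))
    refine ⟨a, fun t ht => ?_⟩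
    have h1 := ha ⟨t, by simpa using ht⟩
    simp only [List.get_eq_getElem, List.getElem_ofFn] at h1
    exact h1
  choose A hA using hfp
  set z : ℕ → (ℤ → Bool) := fun n s => y0 (s + (A n + n)) with hz
  have hzY : ∀ n, z n ∈ Y := fun n => hshift (A n + n) y0 hy0
  have hagree : ∀ (n : ℕ) (s : ℤ), s.natAbs ≤ n → z n s = x s := by
    intro n s hs
    have ht : (s + n).toNat < 2 * n + 1 := by omega
    have h1 := hA n (s + n).toNat ht
    have e1 : -(n : ℤ) + ((s + n).toNat : ℕ) = s := by omega
    rw [e1] at h1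
    show y0 (s + (A n + (n : ℤ))) = x s
    rw [h1]
    congr 1
    omega
  have htend : Filter.Tendsto z Filter.atTop (nhds x) := by
    rw [tendsto_pi_nhds]
    intro s
    refine Filter.Tendsto.congr' ?_ tendsto_const_nhds
    filter_upwards [Filter.eventually_ge_atTop s.natAbs] with n hn
    exact (hagree n s hn).symm
  exact hYclosed.mem_of_tendsto htend (Filter.Eventually.of_forall hzY)
end
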